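/- arXiv:1506.03461 — 6 statements merged into one kernel-verified Lean document; each statement's English description precedes it below -/
import Mathlib

section
/- Let A(t), B(t), C(t), t ∈ [0,1], be three continuous injective curves in ℝ² with common endpoints A(0)=B(0)=C(0)=a and A(1)=B(1)=C(1)=b, where a ≠ b, and whose images pairwise intersect exactly in {a,b}. If C \ {a,b} is contained in the interior (bounded component of the complement) of the Jordan curve A ∪ B, then the interior of the Jordan curve B ∪ C is contained in the interior of A ∪ B. -/
/-!
Let `x` lie inside `B ∪ C`, with bounded component `K` in the complement of `B ∪ C`. If `x` were
on `A`, then `A` minus its endpoints, a connected set missing `B ∪ C`, would lie in `K`. The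
unbounded component `V` of the complement of `B ∪ C` would then miss `A` and so lie in the
unbounded component of the complement of `A ∪ B`; that one misses `C`, as `C` lies inside `A ∪ B`.
Hence the two unbounded components coincide, the boundary of `V` lies in `B`, and `V` is clopen in
the complement of the arc `B`. But an arc does not separate the plane, and `x ∉ V`. Once `x ∉ A`,
the component of `x` in the complement of `A ∪ B` either meets `C`, and is then bounded by
hypothesis, or misses `C` and lies in `K`.

An arc does not separate the plane because it is a retract of the plane (Tietze): a bounded
complementary component `U` would let the retraction, applied on `closure U` only, extend the
identity of a large circle around a point of `U` to a map of the disc avoiding that point, and the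
identity loop of a circle has no continuous logarithm.
-/

open Set Metric Bornology Filter Complex Real

/-- The interior of a Jordan curve `S`: the union of the bounded connected components
of the complement, i.e. a point lies in the interior iff it is off `S` and its
connected component in the complement is bounded. -/
def jordanInterior (S : Set (ℝ × ℝ)) : Set (ℝ × ℝ) :=
  {x | x ∉ S ∧ Bornology.IsBounded (connectedComponentIn Sᶜ x)}

theorem closure_connectedComponentIn_inter_subset {X : Type*} [TopologicalSpace X] (F : Set X)
    (x : X) : closure (connectedComponentIn F x) ∩ F ⊆ connectedComponentIn F x := by
  by_cases hxF : x ∈ F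
  · rintro y ⟨hyc, hyF⟩
    have hpre : IsPreconnected (insert y (connectedComponentIn F x)) :=
      isPreconnected_connectedComponentIn.subset_closure (subset_insert _ _)
        (insert_subset hyc subset_closure)
    exact hpre.subset_connectedComponentIn (mem_insert_of_mem _ (mem_connectedComponentIn hxF))
      (insert_subset hyF (connectedComponentIn_subset _ _)) (mem_insert _ _)
  · simp [connectedComponentIn_eq_empty hxF]

theorem connectedComponentIn_subset_connectedComponentIn {X : Type*} [TopologicalSpace X]
    {F G : Set X} {x : X} (hx : x ∈ F) (h : connectedComponentIn F x ⊆ G) :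
    connectedComponentIn F x ⊆ connectedComponentIn G x :=
  isPreconnected_connectedComponentIn.subset_connectedComponentIn (mem_connectedComponentIn hx) h

theorem connectedComponentIn_compl_union_eq {X : Type*} [TopologicalSpace X] {A B C : Set X}
    {p : X} (hp : p ∉ A ∪ B) (hA : Disjoint (connectedComponentIn (B ∪ C)ᶜ p) A)
    (hC : Disjoint (connectedComponentIn (A ∪ B)ᶜ p) C) :
    connectedComponentIn (B ∪ C)ᶜ p = connectedComponentIn (A ∪ B)ᶜ p := by
  have hpC : p ∉ C := Set.disjoint_left.1 hC (mem_connectedComponentIn hp)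
  have hpBC : p ∉ B ∪ C := by rintro (h | h); exacts [hp (.inr h), hpC h]
  refine subset_antisymm (connectedComponentIn_subset_connectedComponentIn hpBC ?_)
    (connectedComponentIn_subset_connectedComponentIn hp ?_)
  · rintro y hy (hyA | hyB)
    exacts [Set.disjoint_left.1 hA hy hyA, connectedComponentIn_subset _ _ hy (.inl hyB)]
  · rintro y hy (hyB | hyC)
    exacts [connectedComponentIn_subset _ _ hy (.inr hyB), Set.disjoint_left.1 hC hy hyC]

theorem closure_connectedComponentIn_inter_compl_subset {X : Type*} [TopologicalSpace X]
    {A B C : Set X} {p : X} (hAC : A ∩ C ⊆ B)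
    (hV : connectedComponentIn (B ∪ C)ᶜ p = connectedComponentIn (A ∪ B)ᶜ p) :
    closure (connectedComponentIn (B ∪ C)ᶜ p) ∩ Bᶜ ⊆ connectedComponentIn (B ∪ C)ᶜ p := by
  rintro y ⟨hyV, hyB⟩
  by_cases hyC : y ∈ C
  · have hyAB : y ∉ A ∪ B := by rintro (h | h); exacts [hyB (hAC ⟨h, hyC⟩), hyB h]
    rw [hV] at hyV ⊢
    exact closure_connectedComponentIn_inter_subset _ _ ⟨hyV, hyAB⟩
  · exact closure_connectedComponentIn_inter_subset _ _
      ⟨hyV, by rintro (h | h); exacts [hyB h, hyC h]⟩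

theorem Set.InjOn.image_Icc_sdiff_pair {α β : Type*} [PartialOrder α] {f : α → β} {a b : α}
    (hab : a ≤ b) (hf : InjOn f (Icc a b)) : f '' Icc a b \ {f a, f b} = f '' Ioo a b := by
  rw [← Icc_sdiff_both, ← image_pair f a b,
    hf.image_sdiff_subset (pair_subset (left_mem_Icc.2 hab) (right_mem_Icc.2 hab))]

section Exterior

variable {E : Type*} [NormedAddCommGroup E] [NormedSpace ℝ E]

theorem isPreconnected_compl_closedBall (h : 1 < Module.rank ℝ E) (c : E) {R : ℝ}
    (hR : 0 ≤ R) : IsPreconnected (closedBall c R)ᶜ := by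
  have himg :
      (fun p : E × ℝ ↦ c + p.2 • p.1) '' (sphere 0 1 ×ˢ Ioi R) = (closedBall c R)ᶜ := by
    refine Subset.antisymm ?_ fun z hz ↦ ?_
    · rintro _ ⟨⟨v, t⟩, ⟨hv, ht⟩, rfl⟩
      rw [mem_sphere_zero_iff_norm] at hv
      simpa [dist_eq_norm, norm_smul, hv, abs_of_pos (hR.trans_lt ht)] using ht
    · rw [mem_compl_iff, mem_closedBall, not_le, dist_eq_norm] at hz
      have hzc : ‖z - c‖ ≠ 0 := (hR.trans_lt hz).ne'
      refine ⟨⟨‖z - c‖⁻¹ • (z - c), ‖z - c‖⟩, ⟨?_, hz⟩, ?_⟩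
      · simp [norm_smul, hzc]
      · simp [smul_smul, hzc]
  rw [← himg]
  exact ((isPreconnected_sphere h 0 1).prod isPreconnected_Ioi).image _
    (continuous_const.add (continuous_snd.smul continuous_fst)).continuousOn

theorem compl_closedBall_subset_connectedComponentIn (h : 1 < Module.rank ℝ E) {S : Set E}
    {c : E} {R : ℝ} (hR : 0 ≤ R) (hS : S ⊆ closedBall c R) {p : E} (hp : p ∉ closedBall c R) :
    (closedBall c R)ᶜ ⊆ connectedComponentIn Sᶜ p :=
  (isPreconnected_compl_closedBall h c hR).subset_connectedComponentIn hp
    (compl_subset_compl.2 hS)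

theorem not_isBounded_compl_closedBall [Nontrivial E] (c : E) (R : ℝ) :
    ¬IsBounded (closedBall c R)ᶜ := fun hb ↦
  NormedSpace.unbounded_univ ℝ E
    (compl_union_self (closedBall c R) ▸ hb.union isBounded_closedBall)

theorem Bornology.IsBounded.eventually_not_isBounded_connectedComponentIn_compl
    (h : 1 < Module.rank ℝ E) {S : Set E} (hS : IsBounded S) :
    ∀ᶠ p in cobounded E, ¬IsBounded (connectedComponentIn Sᶜ p) := by
  have := rank_pos_iff_nontrivial.1 (zero_lt_one.trans h)
  obtain ⟨R, hR, hSR⟩ := hS.subset_closedBall_lt 0 0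
  filter_upwards [isBounded_def.1 (isBounded_closedBall (x := (0 : E)) (r := R))]
    with p hp hbdd
  exact not_isBounded_compl_closedBall 0 R
    (hbdd.subset (compl_closedBall_subset_connectedComponentIn h hR.le hSR hp))

theorem Bornology.IsBounded.isPreconnected_compl (h : 1 < Module.rank ℝ E) {S : Set E}
    (hS : IsBounded S) (hcomp : ∀ x ∉ S, ¬IsBounded (connectedComponentIn Sᶜ x)) :
    IsPreconnected Sᶜ := by
  have := rank_pos_iff_nontrivial.1 (zero_lt_one.trans h)
  obtain ⟨R, hR, hSR⟩ := hS.subset_closedBall_lt 0 0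
  obtain ⟨p, hp⟩ := NormedSpace.exists_lt_norm ℝ E R
  refine isPreconnected_of_forall p fun x hx ↦ ⟨connectedComponentIn Sᶜ x,
    connectedComponentIn_subset _ _, ?_, mem_connectedComponentIn hx,
    isPreconnected_connectedComponentIn⟩
  obtain ⟨z, hz, hzR⟩ : ∃ z ∈ connectedComponentIn Sᶜ x, z ∉ closedBall 0 R :=
    not_subset.1 fun hsub ↦ hcomp x hx (isBounded_closedBall.subset hsub)
  rw [connectedComponentIn_eq hz]
  exact compl_closedBall_subset_connectedComponentIn h hR.le hSR hzR (by simpa using hp)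

end Exterior

theorem exists_eq_center_of_continuousOn_closedBall_of_eqOn_sphere {f : ℂ → ℂ} {c : ℂ}
    {R : ℝ} (hR : 0 < R) (hf : ContinuousOn f (closedBall c R)) (hid : EqOn f id (sphere c R)) :
    ∃ z ∈ closedBall c R, f z = c := by
  by_contra! hne
  have := contractibleSpace_closedBall (x := c) hR.le
  have := (convex_closedBall c R).locallyPathConnectedSpace
  have hsphere (θ : ℝ) : circleMap c R θ ∈ closedBall c R :=
    sphere_subset_closedBall (circleMap_mem_sphere c hR.le θ)
  obtain ⟨F, ⟨-, hF⟩, -⟩ := isCoveringMapOn_exp.existsUnique_continuousMap_lifts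
    (A := closedBall c R)
    ⟨fun z ↦ f z - c, (hf.sub continuousOn_const).comp_continuous continuous_subtype_val
      Subtype.property⟩
    (a₀ := ⟨c, mem_closedBall_self hR.le⟩)
    (exp_log (sub_ne_zero.2 (hne c (mem_closedBall_self hR.le))))
    (fun z ↦ sub_ne_zero.2 (hne z z.2))
  have hexpF (θ : ℝ) : exp (F ⟨_, hsphere θ⟩) = circleMap 0 R θ := by
    have : exp (F ⟨_, hsphere θ⟩) = f (circleMap c R θ) - c := congrFun hF _
    rw [this, hid (circleMap_mem_sphere c hR.le θ), id, circleMap_sub_center]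
  -- two lifts through `exp` of the loop `circleMap 0 R`, agreeing at `0`
  have hlifts : (fun θ : ℝ ↦ F ⟨_, hsphere θ⟩) = fun θ : ℝ ↦ θ * I + F ⟨_, hsphere 0⟩ := by
    refine isCoveringMap_exp.eq_of_comp_eq (by fun_prop) (by fun_prop) ?_ 0 (by simp)
    funext θ
    ext
    simp only [Function.comp_apply, hexpF, Complex.exp_add, circleMap_zero]
    simp [mul_comm]
  have hloop : (⟨_, hsphere (2 * π)⟩ : closedBall c R) = ⟨_, hsphere 0⟩ :=
    Subtype.ext (by simpa using periodic_circleMap c R 0)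
  have := congrFun hlifts (2 * π)
  rw [hloop] at this
  simp [Real.pi_ne_zero] at this

theorem not_isBounded_connectedComponentIn_compl_of_retraction {Γ : Set ℂ} (hΓ : IsClosed Γ)
    {r : ℂ → ℂ} (hr : Continuous r) (hrΓ : ∀ z, r z ∈ Γ) (hrfix : EqOn r id Γ) {x : ℂ}
    (hx : x ∉ Γ) : ¬IsBounded (connectedComponentIn Γᶜ x) := by
  intro hU
  set U := connectedComponentIn Γᶜ x
  obtain ⟨R, hR, hUR⟩ := hU.closure.subset_ball_lt 0 x
  classical
  -- collapsing `closure U` onto `Γ` by `r` gives a continuous map avoiding `x`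
  set f : ℂ → ℂ := fun w ↦ if w ∈ closure U then r w else w
  have hf : Continuous f := by
    refine hr.if (fun w hw ↦ hrfix ?_) continuous_id
    have hw' : w ∈ closure U \ U :=
      (hΓ.isOpen_compl.connectedComponentIn).frontier_eq ▸ frontier_closure_subset hw
    by_contra hwΓ
    exact hw'.2 (closure_connectedComponentIn_inter_subset _ _ ⟨hw'.1, hwΓ⟩)
  have hfsphere : EqOn f id (sphere x R) := fun w hw ↦
    if_neg fun hwU ↦ (mem_ball.1 (hUR hwU)).ne (mem_sphere.1 hw)
  obtain ⟨z, -, hz⟩ :=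
    exists_eq_center_of_continuousOn_closedBall_of_eqOn_sphere hR hf.continuousOn hfsphere
  by_cases hzU : z ∈ closure U
  · simp only [f, if_pos hzU] at hz
    exact hx (hz ▸ hrΓ z)
  · simp only [f, if_neg hzU] at hz
    exact hzU (hz ▸ subset_closure (mem_connectedComponentIn hx))

theorem exists_retraction_image_Icc {X : Type*} [TopologicalSpace X] [NormalSpace X]
    [T2Space X] {γ : ℝ → X} {a b : ℝ} (hab : a ≤ b) (hc : ContinuousOn γ (Icc a b))
    (hi : InjOn γ (Icc a b)) :
    ∃ r : X → X, Continuous r ∧ (∀ x, r x ∈ γ '' Icc a b) ∧ EqOn r id (γ '' Icc a b) := by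
  have hemb : Topology.IsClosedEmbedding ((Icc a b).domRestrict γ) :=
    hc.domRestrict.isClosedEmbedding hi.injective
  -- Tietze: extend the inverse parametrisation of the arc to all of `X`
  obtain ⟨g, hg⟩ := ContinuousMap.exists_extension hemb ⟨Subtype.val, continuous_subtype_val⟩
  refine ⟨fun x ↦ γ (projIcc a b hab (g x)), ?_,
    fun x ↦ mem_image_of_mem _ (projIcc a b hab _).2, ?_⟩
  · exact hc.comp_continuous
      (continuous_subtype_val.comp (continuous_projIcc.comp g.continuous))
      fun x ↦ (projIcc a b hab _).2
  · rintro _ ⟨t, ht, rfl⟩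
    have hgt : g (γ t) = t := DFunLike.congr_fun hg ⟨t, ht⟩
    simp [hgt, projIcc_of_mem hab ht]

theorem isPreconnected_compl_image_Icc_complex {γ : ℝ → ℂ} {a b : ℝ} (hab : a ≤ b)
    (hc : ContinuousOn γ (Icc a b)) (hi : InjOn γ (Icc a b)) :
    IsPreconnected (γ '' Icc a b)ᶜ := by
  have hΓ : IsCompact (γ '' Icc a b) := isCompact_Icc.image_of_continuousOn hc
  obtain ⟨r, hr, hrΓ, hrfix⟩ := exists_retraction_image_Icc hab hc hi
  exact hΓ.isBounded.isPreconnected_compl (rank_real_complex ▸ Nat.one_lt_ofNat) fun x hx ↦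
    not_isBounded_connectedComponentIn_compl_of_retraction hΓ.isClosed hr hrΓ hrfix hx

theorem isPreconnected_compl_image_Icc {γ : ℝ → ℝ × ℝ} {a b : ℝ} (hab : a ≤ b)
    (hc : ContinuousOn γ (Icc a b)) (hi : InjOn γ (Icc a b)) :
    IsPreconnected (γ '' Icc a b)ᶜ := by
  let e : ℂ ≃ₜ ℝ × ℝ := equivRealProdCLM.toHomeomorph
  have h := (isPreconnected_compl_image_Icc_complex hab
    (e.symm.continuous.comp_continuousOn hc) (e.symm.injective.comp_injOn hi)).image e
    e.continuous.continuousOn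
  rwa [e.image_compl, ← image_comp, ← Function.comp_assoc, e.self_comp_symm,
    Function.id_comp] at h

section JordanInterior

variable {A B C : Set (ℝ × ℝ)}

theorem jordanInterior_diff_subset (hC : C \ (A ∪ B) ⊆ jordanInterior (A ∪ B)) :
    jordanInterior (B ∪ C) \ A ⊆ jordanInterior (A ∪ B) := by
  rintro x ⟨⟨hxBC, hK⟩, hxA⟩
  have hxAB : x ∉ A ∪ B := by rintro (h | h); exacts [hxA h, hxBC (.inl h)]
  refine ⟨hxAB, ?_⟩
  by_cases hW : ∃ y ∈ connectedComponentIn (A ∪ B)ᶜ x, y ∈ C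
  · obtain ⟨y, hyW, hyC⟩ := hW
    rw [connectedComponentIn_eq hyW]
    exact (hC ⟨hyC, connectedComponentIn_subset _ _ hyW⟩).2
  · push Not at hW
    refine hK.subset (connectedComponentIn_subset_connectedComponentIn hxAB fun y hy ↦ ?_)
    rintro (hyB | hyC)
    exacts [connectedComponentIn_subset _ _ hy (.inr hyB), hW y hy hyC]

theorem disjoint_jordanInterior_left (hBC : IsClosed (B ∪ C)) (hAB : IsBounded (A ∪ B))
    (hAdiff : IsPreconnected (A \ B)) (hAC : A ∩ C ⊆ B) (hBc : IsPreconnected Bᶜ)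
    (hC : C \ (A ∪ B) ⊆ jordanInterior (A ∪ B)) : Disjoint (jordanInterior (B ∪ C)) A := by
  rw [Set.disjoint_left]
  rintro x ⟨hxBC, hK⟩ hxA
  set K := connectedComponentIn (B ∪ C)ᶜ x with hKdef
  have hAK : A \ B ⊆ K := hAdiff.subset_connectedComponentIn ⟨hxA, fun h ↦ hxBC (.inl h)⟩
    fun y hy ↦ by rintro (h | h); exacts [hy.2 h, hy.2 (hAC ⟨hy.1, h⟩)]
  have hrank : 1 < Module.rank ℝ (ℝ × ℝ) := by rw [rank_prod', Module.rank_self]; norm_num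
  obtain ⟨p, hV', hpK⟩ := ((hAB.eventually_not_isBounded_connectedComponentIn_compl hrank).and
    (isBounded_def.1 hK)).exists
  have hpAB : p ∉ A ∪ B := fun h ↦ hV' <| by
    rw [connectedComponentIn_eq_empty (not_not_intro h)]; exact isBounded_empty
  have hV'C : Disjoint (connectedComponentIn (A ∪ B)ᶜ p) C := by
    refine Set.disjoint_left.2 fun y hy hyC ↦ hV' ?_
    rw [connectedComponentIn_eq hy]
    exact (hC ⟨hyC, connectedComponentIn_subset _ _ hy⟩).2
  have hpBC : p ∉ B ∪ C := by
    rintro (h | h)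
    exacts [hpAB (.inr h), Set.disjoint_left.1 hV'C (mem_connectedComponentIn hpAB) h]
  set V := connectedComponentIn (B ∪ C)ᶜ p
  have hVK : Disjoint V K := by
    refine Set.disjoint_left.2 fun y hyV hyK ↦ hpK ?_
    rw [hKdef, connectedComponentIn_eq hyK, ← connectedComponentIn_eq hyV]
    exact mem_connectedComponentIn hpBC
  have hVA : Disjoint V A := by
    refine Set.disjoint_left.2 fun y hy hyA ↦ ?_
    by_cases hyB : y ∈ B
    · exact connectedComponentIn_subset _ _ hy (.inl hyB)
    · exact Set.disjoint_left.1 hVK hy (hAK ⟨hyA, hyB⟩)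
  have hBV : Bᶜ ⊆ V := hBc.subset_of_closure_inter_subset hBC.isOpen_compl.connectedComponentIn
    ⟨p, fun h ↦ hpBC (.inl h), mem_connectedComponentIn hpBC⟩
    (closure_connectedComponentIn_inter_compl_subset hAC
      (connectedComponentIn_compl_union_eq hpAB hVA hV'C))
  exact Set.disjoint_left.1 hVK (hBV fun h ↦ hxBC (.inl h)) (mem_connectedComponentIn hxBC)

theorem jordanInterior_union_subset (hBC : IsClosed (B ∪ C)) (hAB : IsBounded (A ∪ B))
    (hAdiff : IsPreconnected (A \ B)) (hAC : A ∩ C ⊆ B) (hBc : IsPreconnected Bᶜ)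
    (hC : C \ (A ∪ B) ⊆ jordanInterior (A ∪ B)) :
    jordanInterior (B ∪ C) ⊆ jordanInterior (A ∪ B) := fun _ hx ↦
  jordanInterior_diff_subset hC
    ⟨hx, disjoint_left.1 (disjoint_jordanInterior_left hBC hAB hAdiff hAC hBc hC) hx⟩

end JordanInterior

theorem stmt0_general
    (A B C : ℝ → ℝ × ℝ) (a b : ℝ × ℝ)
    (hAc : ContinuousOn A (Icc 0 1)) (hBc : ContinuousOn B (Icc 0 1))
    (hCc : ContinuousOn C (Icc 0 1))
    (hAi : InjOn A (Icc 0 1)) (hBi : InjOn B (Icc 0 1))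
    (hA0 : A 0 = a)
    (hA1 : A 1 = b)
    (hAB : A '' (Icc 0 1) ∩ B '' (Icc 0 1) = {a, b})
    (hAC : A '' (Icc 0 1) ∩ C '' (Icc 0 1) = {a, b})
    (hCin : C '' (Icc 0 1) \ {a, b} ⊆ jordanInterior (A '' (Icc 0 1) ∪ B '' (Icc 0 1))) :
    jordanInterior (B '' (Icc 0 1) ∪ C '' (Icc 0 1)) ⊆
      jordanInterior (A '' (Icc 0 1) ∪ B '' (Icc 0 1)) := by
  have hA := isCompact_Icc.image_of_continuousOn hAc
  have hB := isCompact_Icc.image_of_continuousOn hBc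
  have hC := isCompact_Icc.image_of_continuousOn hCc
  have hAdiff : A '' Icc 0 1 \ B '' Icc 0 1 = A '' Ioo 0 1 := by
    rw [← sdiff_self_inter, hAB, ← hA0, ← hA1, hAi.image_Icc_sdiff_pair zero_le_one]
  have hACB : A '' Icc 0 1 ∩ C '' Icc 0 1 ⊆ B '' Icc 0 1 := hAC ▸ hAB ▸ inter_subset_right
  have habA : ({a, b} : Set (ℝ × ℝ)) ⊆ A '' Icc 0 1 := hAB ▸ inter_subset_left
  have hCin' : C '' Icc 0 1 \ (A '' Icc 0 1 ∪ B '' Icc 0 1) ⊆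
      jordanInterior (A '' Icc 0 1 ∪ B '' Icc 0 1) := fun y hy ↦
    hCin ⟨hy.1, fun hyab ↦ hy.2 (.inl (habA hyab))⟩
  exact jordanInterior_union_subset (hB.isClosed.union hC.isClosed)
    (hA.isBounded.union hB.isBounded)
    (hAdiff ▸ isPreconnected_Ioo.image A (hAc.mono Ioo_subset_Icc_self)) hACB
    (isPreconnected_compl_image_Icc zero_le_one hBc hBi) hCin'

theorem stmt0
    (A B C : ℝ → ℝ × ℝ) (a b : ℝ × ℝ) (hab : a ≠ b)
    (hAc : ContinuousOn A (Icc 0 1)) (hBc : ContinuousOn B (Icc 0 1))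
    (hCc : ContinuousOn C (Icc 0 1))
    (hAi : InjOn A (Icc 0 1)) (hBi : InjOn B (Icc 0 1)) (hCi : InjOn C (Icc 0 1))
    (hA0 : A 0 = a) (hB0 : B 0 = a) (hC0 : C 0 = a)
    (hA1 : A 1 = b) (hB1 : B 1 = b) (hC1 : C 1 = b)
    (hAB : A '' (Icc 0 1) ∩ B '' (Icc 0 1) = {a, b})
    (hAC : A '' (Icc 0 1) ∩ C '' (Icc 0 1) = {a, b})
    (hBC : B '' (Icc 0 1) ∩ C '' (Icc 0 1) = {a, b})
    (hCin : C '' (Icc 0 1) \ {a, b} ⊆ jordanInterior (A '' (Icc 0 1) ∪ B '' (Icc 0 1))) :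
    jordanInterior (B '' (Icc 0 1) ∪ C '' (Icc 0 1)) ⊆
      jordanInterior (A '' (Icc 0 1) ∪ B '' (Icc 0 1)) :=
  stmt0_general A B C a b hAc hBc hCc hAi hBi hA0 hA1 hAB hAC hCin
end

section
/- (Generalized FKG inequality) Let A and D be increasing events and B and E decreasing events for independent Bernoulli percolation on a countable edge set, where A, B, D, E depend only on edges in finite sets 𝒜, ℬ, 𝒟, ℰ respectively. If 𝒜 ∩ ℬ = 𝒜 ∩ ℰ = ℬ ∩ 𝒟 = ∅, then P(A ∩ B | D ∩ E) ≥ P(A ∩ B), provided P(D ∩ E) > 0. -/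
open MeasureTheory

section FKGAux

variable {ι : Type*} [DecidableEq ι]

/-- Combine three partial configurations on disjoint finsets into a full configuration. -/
def cmb (S T R : Finset ι) (x : ↥S → Bool) (y : ↥T → Bool) (z : ↥R → Bool) : ι → Bool :=
  fun i =>
    if h : i ∈ S then x ⟨i, h⟩
    else if h : i ∈ T then y ⟨i, h⟩
    else if h : i ∈ R then z ⟨i, h⟩
    else false

variable {S T R : Finset ι}

lemma cmb_left (x : ↥S → Bool) (y : ↥T → Bool) (z : ↥R → Bool) {i : ι} (h : i ∈ S) :
    cmb S T R x y z i = x ⟨i, h⟩ := dif_pos h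

lemma cmb_mid (x : ↥S → Bool) (y : ↥T → Bool) (z : ↥R → Bool) {i : ι} (h1 : i ∉ S)
    (h2 : i ∈ T) : cmb S T R x y z i = y ⟨i, h2⟩ := by
  simp only [cmb, dif_neg h1, dif_pos h2]

lemma cmb_right (x : ↥S → Bool) (y : ↥T → Bool) (z : ↥R → Bool) {i : ι} (h1 : i ∉ S)
    (h2 : i ∉ T) (h3 : i ∈ R) : cmb S T R x y z i = z ⟨i, h3⟩ := by
  simp only [cmb, dif_neg h1, dif_neg h2, dif_pos h3]

lemma cmb_mono_left (y : ↥T → Bool) (z : ↥R → Bool) :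
    Monotone fun x : ↥S → Bool => cmb S T R x y z := by
  intro x x' hxx' i
  simp only [cmb]
  split
  · exact hxx' _
  · exact le_rfl

lemma cmb_mono_mid (x : ↥S → Bool) (z : ↥R → Bool) :
    Monotone fun y : ↥T → Bool => cmb S T R x y z := by
  intro y y' hyy' i
  simp only [cmb]
  split
  · exact le_rfl
  · split
    · exact hyy' _
    · exact le_rfl

/-- The Bernoulli(p) weight of a configuration on a finite set. -/
def wgt (p : ℝ) (S : Finset ι) (x : ↥S → Bool) : ℝ := ∏ a, (if x a then p else 1 - p)

lemma wgt_nonneg {p : ℝ} (hp0 : 0 ≤ p) (hp1 : p ≤ 1) (S : Finset ι) (x : ↥S → Bool) :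
    0 ≤ wgt p S x :=
  Finset.prod_nonneg fun a _ => by split <;> linarith

lemma wgt_sum (p : ℝ) (S : Finset ι) : ∑ x : ↥S → Bool, wgt p S x = 1 := by
  classical
  have h := Finset.prod_univ_sum (fun _ : ↥S => (Finset.univ : Finset Bool))
    (fun _ b => if b then p else 1 - p)
  simp only [Fintype.piFinset_univ] at h
  unfold wgt
  rw [← h]
  simp

lemma wgt_supermod (p : ℝ) (S : Finset ι) (x x' : ↥S → Bool) :
    wgt p S x * wgt p S x' ≤ wgt p S (x ⊓ x') * wgt p S (x ⊔ x') := by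
  unfold wgt
  rw [← Finset.prod_mul_distrib, ← Finset.prod_mul_distrib]
  refine le_of_eq (Finset.prod_congr rfl fun a _ => ?_)
  cases hx : x a <;> cases hx' : x' a <;>
    simp [Pi.inf_apply, Pi.sup_apply, hx, hx', mul_comm]

end FKGAux

/-- The Harris/FKG inequality for monotone functions on a finite distributive lattice
with a log-supermodular probability weight. -/
lemma harris_mono {α : Type*} [Fintype α] [DistribLattice α] {μ f g : α → ℝ}
    (hμ0 : ∀ a, 0 ≤ μ a) (hμ1 : ∑ a, μ a = 1)
    (hsm : ∀ a b, μ a * μ b ≤ μ (a ⊓ b) * μ (a ⊔ b))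
    (hf0 : ∀ a, 0 ≤ f a) (hg0 : ∀ a, 0 ≤ g a) (hf : Monotone f) (hg : Monotone g) :
    (∑ a, μ a * f a) * ∑ a, μ a * g a ≤ ∑ a, μ a * (f a * g a) := by
  have := fkg f g μ (fun a => hμ0 a) (fun a => hf0 a) (fun a => hg0 a) hf hg hsm
  simpa [hμ1] using this

/-- The Harris/FKG inequality for antitone functions. -/
lemma harris_anti {α : Type*} [Fintype α] [DistribLattice α] {μ f g : α → ℝ}
    (hμ0 : ∀ a, 0 ≤ μ a) (hμ1 : ∑ a, μ a = 1)
    (hsm : ∀ a b, μ a * μ b ≤ μ (a ⊓ b) * μ (a ⊔ b))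
    (hf0 : ∀ a, 0 ≤ f a) (hg0 : ∀ a, 0 ≤ g a) (hf : Antitone f) (hg : Antitone g) :
    (∑ a, μ a * f a) * ∑ a, μ a * g a ≤ ∑ a, μ a * (f a * g a) := by
  have h := harris_mono (α := αᵒᵈ) (μ := fun a => μ (OrderDual.ofDual a))
    (f := fun a => f (OrderDual.ofDual a)) (g := fun a => g (OrderDual.ofDual a))
    (fun a => hμ0 _) ?_ ?_ (fun a => hf0 _) (fun a => hg0 _) hf.dual_left hg.dual_left
  · exact h
  · exact (Fintype.sum_equiv OrderDual.ofDual _ _ (fun _ => rfl)).trans hμ1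
  · intro a b
    have := hsm (OrderDual.ofDual a) (OrderDual.ofDual b)
    simpa [mul_comm] using this

open scoped Classical in
/-- Decomposition of the measure of an event depending on finitely many coordinates
as the sum over the cylinders of a partition. -/
lemma cyl_decomp {ι : Type*} (P : Measure (ι → Bool)) {κ : Type*} [Fintype κ]
    (c : κ → ι → Bool) (F : Finset ι)
    (hbij : ∀ ω : ι → Bool, ∃! k, ∀ e ∈ F, ω e = c k e)
    (X : Set (ι → Bool)) (hXm : MeasurableSet X)
    (hdep : ∀ ω ω' : ι → Bool, (∀ e ∈ F, ω e = ω' e) → (ω ∈ X ↔ ω' ∈ X)) :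
    P X = ∑ k, if c k ∈ X then P {ω | ∀ e ∈ F, ω e = c k e} else 0 := by
  classical
  set C : κ → Set (ι → Bool) := fun k => {ω | ∀ e ∈ F, ω e = c k e} with hC
  have hCm : ∀ k, MeasurableSet (C k) := by
    intro k
    have h1 : C k = ⋂ e ∈ (F : Set ι), {ω : ι → Bool | ω e = c k e} := by
      ext ω; simp [C]
    have h2 : ∀ e : ι, MeasurableSet {ω : ι → Bool | ω e = c k e} := by
      intro e
      have : {ω : ι → Bool | ω e = c k e} = (fun ω : ι → Bool => ω e) ⁻¹' {c k e} := rfl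
      rw [this]
      exact measurable_pi_apply e (measurableSet_singleton (c k e))
    rw [h1]
    exact MeasurableSet.biInter F.countable_toSet fun e _ => h2 e
  have hX : X = ⋃ k, X ∩ C k := by
    ext ω
    constructor
    · intro h
      obtain ⟨k, hk, -⟩ := hbij ω
      exact Set.mem_iUnion.2 ⟨k, h, hk⟩
    · intro h
      obtain ⟨k, hk, -⟩ := Set.mem_iUnion.1 h
      exact hk
  have hdisj : Pairwise (Function.onFun Disjoint fun k => X ∩ C k) := by
    intro k k' hkk'
    refine Set.disjoint_left.2 fun ω hω hω' => hkk' ?_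
    obtain ⟨k0, hk0, huniq⟩ := hbij ω
    rw [huniq k hω.2, huniq k' hω'.2]
  calc P X = P (⋃ k, X ∩ C k) := by rw [← hX]
    _ = ∑' k, P (X ∩ C k) := measure_iUnion hdisj fun k => hXm.inter (hCm k)
    _ = ∑ k, P (X ∩ C k) := tsum_fintype _
    _ = ∑ k, if c k ∈ X then P (C k) else 0 := by
        refine Finset.sum_congr rfl fun k _ => ?_
        by_cases h : c k ∈ X
        · rw [if_pos h]
          congr 1
          refine Set.inter_eq_self_of_subset_right fun ω hω => ?_
          exact (hdep (c k) ω (fun e he => (hω e he).symm)).1 h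
        · rw [if_neg h]
          have : X ∩ C k = ∅ := by
            ext ω
            simp only [Set.mem_inter_iff, Set.mem_empty_iff_false, iff_false, not_and]
            intro hω hωC
            exact h ((hdep ω (c k) hωC).1 hω)
          rw [this, measure_empty]

lemma triple_sum_factor {α β γ : Type*} [Fintype α] [Fintype β] [Fintype γ]
    (f : α → ℝ) (g : β → ℝ) (h : γ → ℝ) :
    ∑ x, ∑ y, ∑ z, f x * g y * h z = (∑ x, f x) * (∑ y, g y) * (∑ z, h z) := by
  calc ∑ x, ∑ y, ∑ z, f x * g y * h z
      = ∑ x, ∑ y, (f x * g y) * ∑ z, h z := by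
        refine Finset.sum_congr rfl fun x _ => Finset.sum_congr rfl fun y _ => ?_
        rw [Finset.mul_sum]
    _ = ∑ x, (f x * ∑ y, g y) * ∑ z, h z := by
        refine Finset.sum_congr rfl fun x _ => ?_
        rw [← Finset.sum_mul, ← Finset.mul_sum]
    _ = (∑ x, f x) * (∑ y, g y) * (∑ z, h z) := by
        rw [← Finset.sum_mul, ← Finset.sum_mul]

lemma triple_sum_rearr {α β γ : Type*} [Fintype α] [Fintype β] [Fintype γ]
    (U : γ → α → ℝ) (V : γ → β → ℝ) (W : γ → ℝ) :
    ∑ x, ∑ y, ∑ z, U z x * V z y * W z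
      = ∑ z, W z * ((∑ x, U z x) * (∑ y, V z y)) := by
  calc ∑ x, ∑ y, ∑ z, U z x * V z y * W z
      = ∑ x, ∑ z, ∑ y, U z x * V z y * W z :=
        Finset.sum_congr rfl fun x _ => Finset.sum_comm
    _ = ∑ z, ∑ x, ∑ y, U z x * V z y * W z := Finset.sum_comm
    _ = ∑ z, W z * ((∑ x, U z x) * (∑ y, V z y)) := by
        refine Finset.sum_congr rfl fun z _ => ?_
        calc ∑ x, ∑ y, U z x * V z y * W z
            = ∑ x, (∑ y, U z x * V z y) * W z := by
              refine Finset.sum_congr rfl fun x _ => (Finset.sum_mul _ _ _).symm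
          _ = (∑ x, ∑ y, U z x * V z y) * W z := (Finset.sum_mul _ _ _).symm
          _ = ((∑ x, U z x) * (∑ y, V z y)) * W z := by rw [Fintype.sum_mul_sum]
          _ = W z * ((∑ x, U z x) * (∑ y, V z y)) := mul_comm _ _

/-- The generalized FKG inequality for independent Bernoulli percolation on a countable
edge set: if increasing events `A`, `D` and decreasing events `B`, `E` depend only on
edges in finite sets `𝒜`, `ℬ`, `𝒟`, `ℰ` with `𝒜 ∩ ℬ = 𝒜 ∩ ℰ = ℬ ∩ 𝒟 = ∅`, then
`P(A ∩ B | D ∩ E) ≥ P(A ∩ B)`. -/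
theorem stmt2 {ι : Type*} [Countable ι]
    (P : Measure (ι → Bool)) [IsProbabilityMeasure P]
    (p : ℝ) (hp0 : 0 ≤ p) (hp1 : p ≤ 1)
    -- `P` is the product Bernoulli(p) measure: cylinder probabilities are products
    (hprod : ∀ (s : Finset ι) (g : ι → Bool),
      P {ω | ∀ e ∈ s, ω e = g e} =
        ∏ e ∈ s, (if g e then ENNReal.ofReal p else ENNReal.ofReal (1 - p)))
    (A B D E : Set (ι → Bool))
    (hAm : MeasurableSet A) (hBm : MeasurableSet B) (hDm : MeasurableSet D)
    (hEm : MeasurableSet E)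
    -- A and D increasing, B and E decreasing
    (hAinc : ∀ ω ω' : ι → Bool, ω ≤ ω' → ω ∈ A → ω' ∈ A)
    (hDinc : ∀ ω ω' : ι → Bool, ω ≤ ω' → ω ∈ D → ω' ∈ D)
    (hBdec : ∀ ω ω' : ι → Bool, ω ≤ ω' → ω' ∈ B → ω ∈ B)
    (hEdec : ∀ ω ω' : ι → Bool, ω ≤ ω' → ω' ∈ E → ω ∈ E)
    (𝒜 ℬ 𝒟 ℰ : Finset ι)
    -- each event depends only on the edges in the corresponding finite set
    (hAdep : ∀ ω ω' : ι → Bool, (∀ i ∈ 𝒜, ω i = ω' i) → (ω ∈ A ↔ ω' ∈ A))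
    (hBdep : ∀ ω ω' : ι → Bool, (∀ i ∈ ℬ, ω i = ω' i) → (ω ∈ B ↔ ω' ∈ B))
    (hDdep : ∀ ω ω' : ι → Bool, (∀ i ∈ 𝒟, ω i = ω' i) → (ω ∈ D ↔ ω' ∈ D))
    (hEdep : ∀ ω ω' : ι → Bool, (∀ i ∈ ℰ, ω i = ω' i) → (ω ∈ E ↔ ω' ∈ E))
    (hAB : Disjoint 𝒜 ℬ) (hAE : Disjoint 𝒜 ℰ) (hBD : Disjoint ℬ 𝒟)
    (hpos : 0 < P (D ∩ E)) :
    P (A ∩ B) ≤ ProbabilityTheory.cond P (D ∩ E) (A ∩ B) := by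
  classical
  set R : Finset ι := (𝒟 ∪ ℰ) \ (𝒜 ∪ ℬ) with hRdef
  set F : Finset ι := 𝒜 ∪ ℬ ∪ R with hFdef
  have hRA : ∀ i ∈ R, i ∉ 𝒜 := fun i hi h =>
    (Finset.mem_sdiff.1 hi).2 (Finset.mem_union_left _ h)
  have hRB : ∀ i ∈ R, i ∉ ℬ := fun i hi h =>
    (Finset.mem_sdiff.1 hi).2 (Finset.mem_union_right _ h)
  have hBA : ∀ i ∈ ℬ, i ∉ 𝒜 := fun i hi h => (Finset.disjoint_left.1 hAB) h hi
  have hDB : ∀ i ∈ 𝒟, i ∉ ℬ := fun i hi h => (Finset.disjoint_left.1 hBD) h hi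
  have hEA : ∀ i ∈ ℰ, i ∉ 𝒜 := fun i hi h => (Finset.disjoint_left.1 hAE) h hi
  have hAF : ∀ i ∈ 𝒜, i ∈ F := fun i h =>
    Finset.mem_union_left _ (Finset.mem_union_left _ h)
  have hBF : ∀ i ∈ ℬ, i ∈ F := fun i h =>
    Finset.mem_union_left _ (Finset.mem_union_right _ h)
  have hDF : ∀ i ∈ 𝒟, i ∈ F := by
    intro i h
    by_cases hab : i ∈ 𝒜 ∪ ℬ
    · exact Finset.mem_union_left _ hab
    · exact Finset.mem_union_right _ (Finset.mem_sdiff.2 ⟨Finset.mem_union_left _ h, hab⟩)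
  have hEF : ∀ i ∈ ℰ, i ∈ F := by
    intro i h
    by_cases hab : i ∈ 𝒜 ∪ ℬ
    · exact Finset.mem_union_left _ hab
    · exact Finset.mem_union_right _ (Finset.mem_sdiff.2 ⟨Finset.mem_union_right _ h, hab⟩)
  have hFsplit : ∀ i ∈ F, i ∈ 𝒜 ∨ i ∈ ℬ ∨ i ∈ R := by
    intro i h
    rcases Finset.mem_union.1 h with h | h
    · rcases Finset.mem_union.1 h with h | h
      · exact Or.inl h
      · exact Or.inr (Or.inl h)
    · exact Or.inr (Or.inr h)
  have hDmemR : ∀ i ∈ 𝒟, i ∉ 𝒜 → i ∈ R := by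
    intro i hi hiA
    refine Finset.mem_sdiff.2 ⟨Finset.mem_union_left _ hi, fun h => ?_⟩
    rcases Finset.mem_union.1 h with h | h
    · exact hiA h
    · exact hDB i hi h
  have hEmemR : ∀ i ∈ ℰ, i ∉ ℬ → i ∈ R := by
    intro i hi hiB
    refine Finset.mem_sdiff.2 ⟨Finset.mem_union_right _ hi, fun h => ?_⟩
    rcases Finset.mem_union.1 h with h | h
    · exact hEA i hi h
    · exact hiB h
  -- the cylinder parameterization
  have hbij : ∀ ω : ι → Bool, ∃! k : (↥𝒜 → Bool) × (↥ℬ → Bool) × (↥R → Bool),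
      ∀ e ∈ F, ω e = cmb 𝒜 ℬ R k.1 k.2.1 k.2.2 e := by
    intro ω
    refine ⟨(fun a => ω a, fun b => ω b, fun r => ω r), ?_, ?_⟩
    · intro e he
      rcases hFsplit e he with h | h | h
      · rw [cmb_left _ _ _ h]
      · rw [cmb_mid _ _ _ (hBA e h) h]
      · rw [cmb_right _ _ _ (hRA e h) (hRB e h) h]
    · rintro ⟨x, y, z⟩ hk
      refine Prod.ext ?_ (Prod.ext ?_ ?_)
      · funext a
        have h := hk a (hAF a a.2)
        rw [cmb_left _ _ _ a.2] at h
        exact h.symm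
      · funext b
        have h := hk b (hBF b b.2)
        rw [cmb_mid _ _ _ (hBA b b.2) b.2] at h
        exact h.symm
      · funext r
        have h := hk r (Finset.mem_union_right _ r.2)
        rw [cmb_right _ _ _ (hRA r r.2) (hRB r r.2) r.2] at h
        exact h.symm
  -- indicator functions
  set aff : ↥𝒜 → Bool := fun _ => false with haff
  set bff : ↥ℬ → Bool := fun _ => false with hbff
  set rff : ↥R → Bool := fun _ => false with hrff
  set fA : (↥𝒜 → Bool) → ℝ := fun x => if cmb 𝒜 ℬ R x bff rff ∈ A then 1 else 0 with hfA
  set fB : (↥ℬ → Bool) → ℝ := fun y => if cmb 𝒜 ℬ R aff y rff ∈ B then 1 else 0 with hfB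
  set fD : (↥R → Bool) → (↥𝒜 → Bool) → ℝ :=
    fun z x => if cmb 𝒜 ℬ R x bff z ∈ D then 1 else 0 with hfD
  set fE : (↥R → Bool) → (↥ℬ → Bool) → ℝ :=
    fun z y => if cmb 𝒜 ℬ R aff y z ∈ E then 1 else 0 with hfE
  -- membership rewrites
  have hmemA : ∀ (x : ↥𝒜 → Bool) (y : ↥ℬ → Bool) (z : ↥R → Bool),
      (cmb 𝒜 ℬ R x y z ∈ A) ↔ (cmb 𝒜 ℬ R x bff rff ∈ A) := by
    intro x y z
    refine hAdep _ _ ?_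
    intro i hi
    rw [cmb_left _ _ _ hi, cmb_left _ _ _ hi]
  have hmemB : ∀ (x : ↥𝒜 → Bool) (y : ↥ℬ → Bool) (z : ↥R → Bool),
      (cmb 𝒜 ℬ R x y z ∈ B) ↔ (cmb 𝒜 ℬ R aff y rff ∈ B) := by
    intro x y z
    refine hBdep _ _ ?_
    intro i hi
    rw [cmb_mid _ _ _ (hBA i hi) hi, cmb_mid _ _ _ (hBA i hi) hi]
  have hmemD : ∀ (x : ↥𝒜 → Bool) (y : ↥ℬ → Bool) (z : ↥R → Bool),
      (cmb 𝒜 ℬ R x y z ∈ D) ↔ (cmb 𝒜 ℬ R x bff z ∈ D) := by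
    intro x y z
    refine hDdep _ _ ?_
    intro i hi
    by_cases hiA : i ∈ 𝒜
    · rw [cmb_left _ _ _ hiA, cmb_left _ _ _ hiA]
    · have hiR : i ∈ R := hDmemR i hi hiA
      rw [cmb_right _ _ _ hiA (hDB i hi) hiR, cmb_right _ _ _ hiA (hDB i hi) hiR]
  have hmemE : ∀ (x : ↥𝒜 → Bool) (y : ↥ℬ → Bool) (z : ↥R → Bool),
      (cmb 𝒜 ℬ R x y z ∈ E) ↔ (cmb 𝒜 ℬ R aff y z ∈ E) := by
    intro x y z
    refine hEdep _ _ ?_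
    intro i hi
    by_cases hiB : i ∈ ℬ
    · rw [cmb_mid _ _ _ (hEA i hi) hiB, cmb_mid _ _ _ (hEA i hi) hiB]
    · have hiR : i ∈ R := hEmemR i hi hiB
      rw [cmb_right _ _ _ (hEA i hi) hiB hiR, cmb_right _ _ _ (hEA i hi) hiB hiR]
  -- values of the indicators
  have hfAone : ∀ x, cmb 𝒜 ℬ R x bff rff ∈ A → fA x = 1 := by
    intro x h; simp [hfA, h]
  have hfAzero : ∀ x, cmb 𝒜 ℬ R x bff rff ∉ A → fA x = 0 := by
    intro x h; simp [hfA, h]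
  have hfBone : ∀ y, cmb 𝒜 ℬ R aff y rff ∈ B → fB y = 1 := by
    intro y h; simp [hfB, h]
  have hfBzero : ∀ y, cmb 𝒜 ℬ R aff y rff ∉ B → fB y = 0 := by
    intro y h; simp [hfB, h]
  have hfDone : ∀ z x, cmb 𝒜 ℬ R x bff z ∈ D → fD z x = 1 := by
    intro z x h; simp [hfD, h]
  have hfDzero : ∀ z x, cmb 𝒜 ℬ R x bff z ∉ D → fD z x = 0 := by
    intro z x h; simp [hfD, h]
  have hfEone : ∀ z y, cmb 𝒜 ℬ R aff y z ∈ E → fE z y = 1 := by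
    intro z y h; simp [hfE, h]
  have hfEzero : ∀ z y, cmb 𝒜 ℬ R aff y z ∉ E → fE z y = 0 := by
    intro z y h; simp [hfE, h]
  -- nonnegativity and monotonicity of the indicators
  have hfA0 : ∀ x, 0 ≤ fA x := by intro x; simp only [hfA]; split <;> norm_num
  have hfB0 : ∀ y, 0 ≤ fB y := by intro y; simp only [hfB]; split <;> norm_num
  have hfD0 : ∀ z x, 0 ≤ fD z x := by intro z x; simp only [hfD]; split <;> norm_num
  have hfE0 : ∀ z y, 0 ≤ fE z y := by intro z y; simp only [hfE]; split <;> norm_num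
  have hfAmono : Monotone fA := by
    intro x x' hxx'
    simp only [hfA]
    by_cases hx : cmb 𝒜 ℬ R x bff rff ∈ A
    · rw [if_pos hx, if_pos (hAinc _ _ (cmb_mono_left bff rff hxx') hx)]
    · rw [if_neg hx]; split <;> norm_num
  have hfBanti : Antitone fB := by
    intro y y' hyy'
    simp only [hfB]
    by_cases hy : cmb 𝒜 ℬ R aff y' rff ∈ B
    · rw [if_pos hy, if_pos (hBdec _ _ (cmb_mono_mid aff rff hyy') hy)]
    · rw [if_neg hy]; split <;> norm_num
  have hfDmono : ∀ z, Monotone (fD z) := by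
    intro z x x' hxx'
    simp only [hfD]
    by_cases hx : cmb 𝒜 ℬ R x bff z ∈ D
    · rw [if_pos hx, if_pos (hDinc _ _ (cmb_mono_left bff z hxx') hx)]
    · rw [if_neg hx]; split <;> norm_num
  have hfEanti : ∀ z, Antitone (fE z) := by
    intro z y y' hyy'
    simp only [hfE]
    by_cases hy : cmb 𝒜 ℬ R aff y' z ∈ E
    · rw [if_pos hy, if_pos (hEdec _ _ (cmb_mono_mid aff z hyy') hy)]
    · rw [if_neg hy]; split <;> norm_num
  -- the key reduction of probabilities to finite sums
  have key : ∀ X : Set (ι → Bool), MeasurableSet X →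
      (∀ ω ω' : ι → Bool, (∀ e ∈ F, ω e = ω' e) → (ω ∈ X ↔ ω' ∈ X)) →
      ∀ t : (↥𝒜 → Bool) → (↥ℬ → Bool) → (↥R → Bool) → ℝ,
      (∀ x y z, cmb 𝒜 ℬ R x y z ∈ X → t x y z = wgt p 𝒜 x * wgt p ℬ y * wgt p R z) →
      (∀ x y z, cmb 𝒜 ℬ R x y z ∉ X → t x y z = 0) →
      (P X).toReal = ∑ x : ↥𝒜 → Bool, ∑ y : ↥ℬ → Bool, ∑ z : ↥R → Bool, t x y z := by
    intro X hXm hXdep t ht1 ht0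
    have hdec := cyl_decomp P (fun k : (↥𝒜 → Bool) × (↥ℬ → Bool) × (↥R → Bool) =>
      cmb 𝒜 ℬ R k.1 k.2.1 k.2.2) F hbij X hXm hXdep
    have hdisjABR : Disjoint (𝒜 ∪ ℬ) R := by
      rw [hRdef]
      exact Finset.disjoint_sdiff
    have hcyl : ∀ k : (↥𝒜 → Bool) × (↥ℬ → Bool) × (↥R → Bool),
        P {ω | ∀ e ∈ F, ω e = cmb 𝒜 ℬ R k.1 k.2.1 k.2.2 e} =
        ENNReal.ofReal (wgt p 𝒜 k.1 * wgt p ℬ k.2.1 * wgt p R k.2.2) := by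
      rintro ⟨x, y, z⟩
      rw [hprod F (cmb 𝒜 ℬ R x y z)]
      have hgen : ∀ (S : Finset ι) (w : ↥S → Bool),
          (∀ a : ↥S, cmb 𝒜 ℬ R x y z ↑a = w a) →
          (∏ e ∈ S, if cmb 𝒜 ℬ R x y z e then ENNReal.ofReal p
            else ENNReal.ofReal (1 - p)) = ENNReal.ofReal (wgt p S w) := by
        intro S w hw
        rw [← Finset.prod_coe_sort]
        unfold wgt
        rw [ENNReal.ofReal_prod_of_nonneg (fun a _ => by split <;> linarith)]
        refine Finset.prod_congr rfl fun a _ => ?_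
        rw [hw a]
        by_cases h : w a <;> simp [h]
      have h1 : F = (𝒜 ∪ ℬ) ∪ R := hFdef
      rw [h1, Finset.prod_union hdisjABR, Finset.prod_union hAB]
      rw [hgen 𝒜 x (fun a => cmb_left x y z a.2),
        hgen ℬ y (fun b => cmb_mid x y z (hBA b b.2) b.2),
        hgen R z (fun r => cmb_right x y z (hRA r r.2) (hRB r r.2) r.2)]
      rw [← ENNReal.ofReal_mul (wgt_nonneg hp0 hp1 𝒜 x),
        ← ENNReal.ofReal_mul (mul_nonneg (wgt_nonneg hp0 hp1 𝒜 x) (wgt_nonneg hp0 hp1 ℬ y))]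
    rw [hdec]
    rw [ENNReal.toReal_sum (by
      intro k _
      split
      · rw [hcyl k]; exact ENNReal.ofReal_ne_top
      · exact ENNReal.zero_ne_top)]
    rw [Fintype.sum_prod_type]
    refine Finset.sum_congr rfl fun x _ => ?_
    rw [Fintype.sum_prod_type]
    refine Finset.sum_congr rfl fun y _ => Finset.sum_congr rfl fun z _ => ?_
    by_cases h : cmb 𝒜 ℬ R x y z ∈ X
    · rw [if_pos h, hcyl (x, y, z), ENNReal.toReal_ofReal
        (mul_nonneg (mul_nonneg (wgt_nonneg hp0 hp1 𝒜 x) (wgt_nonneg hp0 hp1 ℬ y))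
          (wgt_nonneg hp0 hp1 R z)), ht1 x y z h]
    · rw [if_neg h, ENNReal.toReal_zero, ht0 x y z h]
  -- the three sums
  have hdepAB : ∀ ω ω' : ι → Bool, (∀ e ∈ F, ω e = ω' e) → (ω ∈ A ∩ B ↔ ω' ∈ A ∩ B) := by
    intro ω ω' h
    simp only [Set.mem_inter_iff]
    exact and_congr (hAdep ω ω' fun i hi => h i (hAF i hi))
      (hBdep ω ω' fun i hi => h i (hBF i hi))
  have hdepDE : ∀ ω ω' : ι → Bool, (∀ e ∈ F, ω e = ω' e) → (ω ∈ D ∩ E ↔ ω' ∈ D ∩ E) := by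
    intro ω ω' h
    simp only [Set.mem_inter_iff]
    exact and_congr (hDdep ω ω' fun i hi => h i (hDF i hi))
      (hEdep ω ω' fun i hi => h i (hEF i hi))
  have hdepDEAB : ∀ ω ω' : ι → Bool, (∀ e ∈ F, ω e = ω' e) →
      (ω ∈ (D ∩ E) ∩ (A ∩ B) ↔ ω' ∈ (D ∩ E) ∩ (A ∩ B)) := by
    intro ω ω' h
    simp only [Set.mem_inter_iff]
    exact and_congr (and_congr (hDdep ω ω' fun i hi => h i (hDF i hi))
        (hEdep ω ω' fun i hi => h i (hEF i hi)))
      (and_congr (hAdep ω ω' fun i hi => h i (hAF i hi))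
        (hBdep ω ω' fun i hi => h i (hBF i hi)))
  have hkey1 : (P (A ∩ B)).toReal
      = (∑ x, wgt p 𝒜 x * fA x) * (∑ y, wgt p ℬ y * fB y) := by
    rw [key (A ∩ B) (hAm.inter hBm) hdepAB
      (fun x y z => (wgt p 𝒜 x * fA x) * (wgt p ℬ y * fB y) * wgt p R z)
      (by
        intro x y z h
        obtain ⟨h1, h2⟩ := h
        rw [hfAone x ((hmemA x y z).1 h1), hfBone y ((hmemB x y z).1 h2)]
        ring)
      (by
        intro x y z h
        rw [Set.mem_inter_iff, not_and_or] at h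
        rcases h with h | h
        · rw [hfAzero x (fun ha => h ((hmemA x y z).2 ha))]; ring
        · rw [hfBzero y (fun hb => h ((hmemB x y z).2 hb))]; ring)]
    rw [triple_sum_factor, wgt_sum, mul_one]
  have hkey2 : (P (D ∩ E)).toReal
      = ∑ z, wgt p R z * ((∑ x, wgt p 𝒜 x * fD z x) * (∑ y, wgt p ℬ y * fE z y)) := by
    rw [key (D ∩ E) (hDm.inter hEm) hdepDE
      (fun x y z => (wgt p 𝒜 x * fD z x) * (wgt p ℬ y * fE z y) * wgt p R z)
      (by
        intro x y z h
        obtain ⟨h1, h2⟩ := h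
        rw [hfDone z x ((hmemD x y z).1 h1), hfEone z y ((hmemE x y z).1 h2)]
        ring)
      (by
        intro x y z h
        rw [Set.mem_inter_iff, not_and_or] at h
        rcases h with h | h
        · rw [hfDzero z x (fun hd => h ((hmemD x y z).2 hd))]; ring
        · rw [hfEzero z y (fun he => h ((hmemE x y z).2 he))]; ring)]
    exact triple_sum_rearr (fun z x => wgt p 𝒜 x * fD z x)
      (fun z y => wgt p ℬ y * fE z y) (wgt p R)
  have hkey3 : (P ((D ∩ E) ∩ (A ∩ B))).toReal
      = ∑ z, wgt p R z * ((∑ x, wgt p 𝒜 x * (fA x * fD z x))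
          * (∑ y, wgt p ℬ y * (fB y * fE z y))) := by
    rw [key ((D ∩ E) ∩ (A ∩ B)) ((hDm.inter hEm).inter (hAm.inter hBm)) hdepDEAB
      (fun x y z => (wgt p 𝒜 x * (fA x * fD z x)) * (wgt p ℬ y * (fB y * fE z y)) * wgt p R z)
      (by
        intro x y z h
        obtain ⟨⟨h3, h4⟩, h1, h2⟩ := h
        rw [hfAone x ((hmemA x y z).1 h1), hfBone y ((hmemB x y z).1 h2),
          hfDone z x ((hmemD x y z).1 h3), hfEone z y ((hmemE x y z).1 h4)]
        ring)
      (by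
        intro x y z h
        rw [Set.mem_inter_iff, Set.mem_inter_iff, Set.mem_inter_iff, not_and_or,
          not_and_or, not_and_or] at h
        rcases h with (h | h) | (h | h)
        · rw [hfDzero z x (fun hd => h ((hmemD x y z).2 hd))]; ring
        · rw [hfEzero z y (fun he => h ((hmemE x y z).2 he))]; ring
        · rw [hfAzero x (fun ha => h ((hmemA x y z).2 ha))]; ring
        · rw [hfBzero y (fun hb => h ((hmemB x y z).2 hb))]; ring)]
    exact triple_sum_rearr (fun z x => wgt p 𝒜 x * (fA x * fD z x))
      (fun z y => wgt p ℬ y * (fB y * fE z y)) (wgt p R)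
  -- the Harris inequalities
  have hH1 : ∀ z, (∑ x, wgt p 𝒜 x * fA x) * (∑ x, wgt p 𝒜 x * fD z x)
      ≤ ∑ x, wgt p 𝒜 x * (fA x * fD z x) := fun z =>
    harris_mono (wgt_nonneg hp0 hp1 𝒜) (wgt_sum p 𝒜) (wgt_supermod p 𝒜)
      hfA0 (hfD0 z) hfAmono (hfDmono z)
  have hH2 : ∀ z, (∑ y, wgt p ℬ y * fB y) * (∑ y, wgt p ℬ y * fE z y)
      ≤ ∑ y, wgt p ℬ y * (fB y * fE z y) := fun z =>
    harris_anti (wgt_nonneg hp0 hp1 ℬ) (wgt_sum p ℬ) (wgt_supermod p ℬ)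
      hfB0 (hfE0 z) hfBanti (hfEanti z)
  -- nonnegativity of the sums
  have hSA0 : 0 ≤ ∑ x, wgt p 𝒜 x * fA x :=
    Finset.sum_nonneg fun x _ => mul_nonneg (wgt_nonneg hp0 hp1 𝒜 x) (hfA0 x)
  have hSB0 : 0 ≤ ∑ y, wgt p ℬ y * fB y :=
    Finset.sum_nonneg fun y _ => mul_nonneg (wgt_nonneg hp0 hp1 ℬ y) (hfB0 y)
  have hSE0 : ∀ z, 0 ≤ ∑ y, wgt p ℬ y * fE z y := fun z =>
    Finset.sum_nonneg fun y _ => mul_nonneg (wgt_nonneg hp0 hp1 ℬ y) (hfE0 z y)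
  have hSAD0 : ∀ z, 0 ≤ ∑ x, wgt p 𝒜 x * (fA x * fD z x) := fun z =>
    Finset.sum_nonneg fun x _ =>
      mul_nonneg (wgt_nonneg hp0 hp1 𝒜 x) (mul_nonneg (hfA0 x) (hfD0 z x))
  -- the main real inequality
  have hmain : (P (A ∩ B)).toReal * (P (D ∩ E)).toReal
      ≤ (P ((D ∩ E) ∩ (A ∩ B))).toReal := by
    rw [hkey1, hkey2, hkey3, Finset.mul_sum]
    refine Finset.sum_le_sum fun z _ => ?_
    have hz0 : 0 ≤ wgt p R z := wgt_nonneg hp0 hp1 R z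
    have hmm : ((∑ x, wgt p 𝒜 x * fA x) * (∑ x, wgt p 𝒜 x * fD z x))
        * ((∑ y, wgt p ℬ y * fB y) * (∑ y, wgt p ℬ y * fE z y))
        ≤ (∑ x, wgt p 𝒜 x * (fA x * fD z x)) * (∑ y, wgt p ℬ y * (fB y * fE z y)) :=
      mul_le_mul (hH1 z) (hH2 z) (mul_nonneg hSB0 (hSE0 z)) (hSAD0 z)
    calc (∑ x, wgt p 𝒜 x * fA x) * (∑ y, wgt p ℬ y * fB y)
          * (wgt p R z * ((∑ x, wgt p 𝒜 x * fD z x) * (∑ y, wgt p ℬ y * fE z y)))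
        = wgt p R z * (((∑ x, wgt p 𝒜 x * fA x) * (∑ x, wgt p 𝒜 x * fD z x))
            * ((∑ y, wgt p ℬ y * fB y) * (∑ y, wgt p ℬ y * fE z y))) := by ring
      _ ≤ wgt p R z * ((∑ x, wgt p 𝒜 x * (fA x * fD z x))
            * (∑ y, wgt p ℬ y * (fB y * fE z y))) := mul_le_mul_of_nonneg_left hmm hz0
  -- conclude in ℝ≥0∞
  rw [ProbabilityTheory.cond_apply (hDm.inter hEm) P (A ∩ B)]
  rw [← ENNReal.div_eq_inv_mul]
  rw [ENNReal.le_div_iff_mul_le (Or.inl hpos.ne') (Or.inl (measure_ne_top P _))]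
  rw [← ENNReal.toReal_le_toReal (ENNReal.mul_ne_top (measure_ne_top P _) (measure_ne_top P _))
    (measure_ne_top P _)]
  rw [ENNReal.toReal_mul]
  exact hmain
end

section
/- Suppose nonnegative numbers P(𝒞,𝒟) indexed by elements 𝒞 of a finite set X and 𝒟 of a finite set Y satisfy the ratio bound P(𝒞,𝒟)·P(𝒞',𝒟') ≤ C₈ · P(𝒞,𝒟')·P(𝒞',𝒟) for all 𝒞,𝒞' ∈ X and 𝒟,𝒟' ∈ Y. Then for any nonnegative weight functions u, u' on X and v, v' on Y, (∑_{𝒞,𝒟} u(𝒞) P(𝒞,𝒟) v(𝒟)) · (∑_{𝒞',𝒟'} u'(𝒞') P(𝒞',𝒟') v'(𝒟')) ≥ (1/C₈) · (∑_{𝒞,𝒟'} u(𝒞) P(𝒞,𝒟') v'(𝒟')) · (∑_{𝒞',𝒟} u'(𝒞') P(𝒞',𝒟) v(𝒟)). -/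
/-- Decoupling inequality: if `P(𝒞,𝒟) P(𝒞',𝒟') ≤ C₈ P(𝒞,𝒟') P(𝒞',𝒟)` for all pairs,
then for any nonnegative weights `u, u', v, v'`,
`(∑ u P v)(∑ u' P v') ≥ (1/C₈) (∑ u P v')(∑ u' P v)`. -/
theorem stmt6 {X Y : Type*} [Fintype X] [Fintype Y]
    (C₈ : ℝ) (hC₈ : 1 ≤ C₈)
    (P : X → Y → ℝ) (hP : ∀ x y, 0 ≤ P x y)
    (hratio : ∀ x x' y y', P x y * P x' y' ≤ C₈ * (P x y' * P x' y))
    (u u' : X → ℝ) (v v' : Y → ℝ)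
    (hu : ∀ x, 0 ≤ u x) (hu' : ∀ x, 0 ≤ u' x)
    (hv : ∀ y, 0 ≤ v y) (hv' : ∀ y, 0 ≤ v' y) :
    (1 / C₈) * ((∑ x, ∑ y, u x * P x y * v' y) * (∑ x, ∑ y, u' x * P x y * v y)) ≤
      (∑ x, ∑ y, u x * P x y * v y) * (∑ x, ∑ y, u' x * P x y * v' y) := by
  have hC₈' : 0 < C₈ := lt_of_lt_of_le one_pos hC₈
  rw [div_mul_eq_mul_div, one_mul, div_le_iff₀ hC₈']
  have e1 : ∀ (f : X → Y → ℝ), (∑ x, ∑ y, f x y) = ∑ p : X × Y, f p.1 p.2 :=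
    fun f => (Fintype.sum_prod_type (f := fun p => f p.1 p.2)).symm
  rw [e1 (fun x y => u x * P x y * v' y), e1 (fun x y => u' x * P x y * v y),
      e1 (fun x y => u x * P x y * v y), e1 (fun x y => u' x * P x y * v' y)]
  rw [Finset.sum_mul_sum, Finset.sum_mul_sum, mul_comm _ C₈, Finset.mul_sum]
  simp only [Finset.mul_sum]
  rw [← Fintype.sum_prod_type (f := fun z : (X × Y) × (X × Y) => (fun p q : X × Y =>
      u p.1 * P p.1 p.2 * v' p.2 * (u' q.1 * P q.1 q.2 * v q.2)) z.1 z.2),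
    ← Fintype.sum_prod_type (f := fun z : (X × Y) × (X × Y) => (fun p q : X × Y =>
      C₈ * (u p.1 * P p.1 p.2 * v p.2 * (u' q.1 * P q.1 q.2 * v' q.2))) z.1 z.2)]
  rw [← Equiv.sum_comp (⟨fun z => ((z.1.1, z.2.2), (z.2.1, z.1.2)),
     fun z => ((z.1.1, z.2.2), (z.2.1, z.1.2)),
     fun _ => rfl, fun _ => rfl⟩ : ((X × Y) × (X × Y)) ≃ ((X × Y) × (X × Y)))
     (fun z => C₈ * (u z.1.1 * P z.1.1 z.1.2 * v z.1.2 *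
      (u' z.2.1 * P z.2.1 z.2.2 * v' z.2.2)))]
  apply Finset.sum_le_sum
  rintro ⟨⟨x, a⟩, ⟨x', b⟩⟩ _
  show u x * P x a * v' a * (u' x' * P x' b * v b) ≤
      C₈ * (u x * P x b * v b * (u' x' * P x' a * v' a))
  have h := hratio x x' a b
  calc u x * P x a * v' a * (u' x' * P x' b * v b)
      = (P x a * P x' b) * (u x * v' a * u' x' * v b) := by ring
    _ ≤ (C₈ * (P x b * P x' a)) * (u x * v' a * u' x' * v b) := by
        apply mul_le_mul_of_nonneg_right h
        exact mul_nonneg (mul_nonneg (mul_nonneg (hu x) (hv' a)) (hu' x')) (hv b)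
    _ = C₈ * (u x * P x b * v b * (u' x' * P x' a * v' a)) := by ring
end

section
/- Let γ be a self-avoiding circuit in ℤ² surrounding the origin (a Jordan curve in the plane with 0 in its interior), and let P be a self-avoiding lattice path with both endpoints on γ and all interior vertices in the exterior of γ, such that P, together with the subpath Q of γ between the endpoints of P that it 'detours', forms a circuit P ∪ Q not surrounding the origin. Then (γ \ Q) ∪ P is a circuit surrounding the origin, and moreover Q minus its endpoints lies in the interior of the Jordan curve P ∪ (γ \ Q). -/
/-!
Borsuk's criterion: a point `z` off a compact set `K ⊆ ℝ²` lies in a bounded component of `Kᶜ`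
exactly when `x ↦ x - z`, read in `ℂ`, has no continuous logarithm on `K`. Logarithms on two
closed sets glue when the sets meet in a connected set, which gives Janiszewski's theorem. With
`A = P ∪ Q` and `B = P ∪ Q'` we have `A ∩ B = P` connected and `γ ⊆ A ∪ B`; the origin lies in
the unbounded component for `A` and in a bounded one for `γ`, hence in a bounded one for `B`.

The component `U` of the origin in the complement of `γ` avoids `P ∪ Q'`, since the points of
`P` off `γ` are exterior to `γ`. Every point `q` of `Q` other than its endpoints is in the closure
of `U`: otherwise the frontier of `U` would lie in the arc `α` left after cutting a small open
subarc around `q` out of `γ`, and `α` would separate the origin from infinity, although an arc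
carries a logarithm of `x ↦ x - z`. So `q` lies in the component of the origin in the
complement of `P ∪ Q'`.
-/

open Set

/-- The exterior of a Jordan curve `S`: union of the unbounded connected components
of the complement. -/
def jordanExterior (S : Set (ℝ × ℝ)) : Set (ℝ × ℝ) :=
  {x | x ∉ S ∧ ¬ Bornology.IsBounded (connectedComponentIn Sᶜ x)}

open Complex

section Components

variable {X : Type*} [TopologicalSpace X]

theorem mem_connectedComponentIn_of_mem_closure {F : Set X} {x y : X}
    (hy : y ∈ closure (connectedComponentIn F x)) (hyF : y ∈ F) :
    y ∈ connectedComponentIn F x := by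
  by_cases hx : x ∈ F
  · have hpre : IsPreconnected (insert y (connectedComponentIn F x)) :=
      isPreconnected_connectedComponentIn.subset_closure (subset_insert _ _)
        (insert_subset hy subset_closure)
    exact hpre.subset_connectedComponentIn (mem_insert_of_mem _ (mem_connectedComponentIn hx))
      (insert_subset hyF (connectedComponentIn_subset _ _)) (mem_insert _ _)
  · simp [connectedComponentIn_eq_empty hx] at hy

theorem frontier_connectedComponentIn_subset [LocallyConnectedSpace X] {F : Set X}
    (hF : IsOpen F) (x : X) : frontier (connectedComponentIn F x) ⊆ Fᶜ := by
  intro y hy hyF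
  rw [hF.connectedComponentIn.frontier_eq] at hy
  exact hy.2 (mem_connectedComponentIn_of_mem_closure hy.1 hyF)

theorem connectedComponentIn_subset_of_frontier_subset {U K : Set X} (hU : IsOpen U) {z : X}
    (hz : z ∈ U) (hUK : frontier U ⊆ K) : connectedComponentIn Kᶜ z ⊆ U := by
  by_cases hzK : z ∈ K
  · simp [connectedComponentIn_eq_empty (show z ∉ Kᶜ from not_not_intro hzK)]
  refine isPreconnected_connectedComponentIn.subset_left_of_subset_union hU
    isClosed_closure.isOpen_compl (disjoint_compl_right.mono_left subset_closure)
    (fun x hx => ?_) ⟨z, mem_connectedComponentIn hzK, hz⟩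
  by_contra h
  simp only [mem_union, mem_compl_iff, not_or, not_not] at h
  exact connectedComponentIn_subset _ _ hx (hUK ⟨h.2, by rw [hU.interior_eq]; exact h.1⟩)

end Components

section Logarithm

variable {X : Type*} [TopologicalSpace X]

def HasLogOn (f : X → ℂ) (s : Set X) : Prop :=
  ∃ g : X → ℂ, ContinuousOn g s ∧ ∀ x ∈ s, exp (g x) = f x

theorem HasLogOn.mono {f : X → ℂ} {s t : Set X} (h : HasLogOn f t) (hst : s ⊆ t) :
    HasLogOn f s :=
  let ⟨g, hgc, hg⟩ := h
  ⟨g, hgc.mono hst, fun x hx => hg x (hst hx)⟩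

theorem hasLogOn_iff_exists_continuousMap {f : X → ℂ} {s : Set X} :
    HasLogOn f s ↔ ∃ g : C(s, ℂ), ∀ x : s, exp (g x) = f x := by
  classical
  constructor
  · rintro ⟨g, hgc, hg⟩
    exact ⟨⟨s.domRestrict g, hgc.domRestrict⟩, fun x => hg x x.2⟩
  · rintro ⟨g, hg⟩
    refine ⟨fun x => if hx : x ∈ s then g ⟨x, hx⟩ else 0, ?_, fun x hx => by simp [hx, hg]⟩
    rw [continuousOn_iff_continuous_domRestrict]
    convert g.continuous with x
    simp

theorem Complex.exp_eq_one_iff_mem_zmultiples {z : ℂ} :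
    exp z = 1 ↔ z ∈ AddSubgroup.zmultiples (2 * Real.pi * I) := by
  simp [exp_eq_one_iff, AddSubgroup.mem_zmultiples_iff, eq_comm]

theorem IsPreconnected.eq_of_exp_eq_one {s : Set X} (hs : IsPreconnected s) {g : X → ℂ}
    (hg : ContinuousOn g s) (h1 : ∀ x ∈ s, exp (g x) = 1) {x y : X} (hx : x ∈ s)
    (hy : y ∈ s) : g x = g y :=
  hs.constant_of_mapsTo
    (isDiscrete_iff_discreteTopology.mpr (NormedSpace.discreteTopology_zmultiples _)) hg
    (fun x hx => exp_eq_one_iff_mem_zmultiples.mp (h1 x hx)) hx hy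

theorem exists_log_of_homotopy {A : Type*} [TopologicalSpace A] {H : unitInterval × A → ℂ}
    (hHc : Continuous H) (hH0 : ∀ p, H p ≠ 0) {g₀ : C(A, ℂ)}
    (hg₀ : ∀ a, exp (g₀ a) = H (0, a)) : ∃ g : C(A, ℂ), ∀ a, exp (g a) = H (1, a) := by
  let H' : C(unitInterval × A, {w : ℂ // w ≠ 0}) := ⟨fun p => ⟨H p, hH0 p⟩, hHc.subtype_mk _⟩
  have hH'0 : ∀ a, H' (0, a) = ⟨exp (g₀ a), exp_ne_zero _⟩ := fun a => Subtype.ext (hg₀ a).symm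
  refine ⟨(isCoveringMap_exp.liftHomotopy H' g₀ hH'0).comp ⟨fun a => (1, a), by fun_prop⟩,
    fun a => ?_⟩
  exact congrArg Subtype.val
    (congrFun (isCoveringMap_exp.liftHomotopy_lifts H' g₀ hH'0) (1, a))

theorem hasLogOn_of_contractibleSpace {f : X → ℂ} {s : Set X} [ContractibleSpace s]
    (hf : ContinuousOn f s) (hf0 : ∀ x ∈ s, f x ≠ 0) : HasLogOn f s := by
  obtain ⟨y, ⟨F⟩⟩ := id_nullhomotopic s
  obtain ⟨g, hg⟩ := exists_log_of_homotopy (H := fun p => f (F.symm p))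
    (hf.domRestrict.comp F.symm.continuous) (fun p => hf0 _ (F.symm p).2)
    (g₀ := .const s (log (f y))) (fun a => by simp [exp_log (hf0 y y.2)])
  exact hasLogOn_iff_exists_continuousMap.mpr ⟨g, fun x => by simpa using hg x⟩

theorem HasLogOn.union {f : X → ℂ} {s t : Set X} (hs : IsClosed s) (ht : IsClosed t)
    (hst : IsPreconnected (s ∩ t)) (h₁ : HasLogOn f s) (h₂ : HasLogOn f t) :
    HasLogOn f (s ∪ t) := by
  classical
  obtain ⟨g₁, hg₁c, hg₁⟩ := h₁
  obtain ⟨g₂, hg₂c, hg₂⟩ := h₂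
  obtain ⟨c, hc, hgc⟩ : ∃ c, exp c = 1 ∧ ∀ x ∈ s ∩ t, g₁ x = g₂ x + c := by
    rcases (s ∩ t).eq_empty_or_nonempty with h | ⟨x₀, hx₀⟩
    · exact ⟨0, exp_zero, by simp [h]⟩
    have hexp : ∀ x ∈ s ∩ t, exp (g₁ x - g₂ x) = 1 := fun x hx => by
      rw [exp_sub, hg₁ x hx.1, hg₂ x hx.2, div_self (hg₁ x hx.1 ▸ exp_ne_zero _)]
    refine ⟨g₁ x₀ - g₂ x₀, hexp x₀ hx₀, fun x hx => ?_⟩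
    have := hst.eq_of_exp_eq_one
      ((hg₁c.mono inter_subset_left).sub (hg₂c.mono inter_subset_right)) hexp hx hx₀
    simp only [Pi.sub_apply] at this
    linear_combination this
  have hpiece : ∀ x ∈ t, s.piecewise g₁ (fun x => g₂ x + c) x = g₂ x + c := fun x hx => by
    by_cases hxs : x ∈ s
    · simp [hxs, hgc x ⟨hxs, hx⟩]
    · simp [hxs]
  refine ⟨s.piecewise g₁ (fun x => g₂ x + c), ?_, ?_⟩
  · exact ContinuousOn.union_of_isClosed
      (hg₁c.congr fun x hx => piecewise_eq_of_mem _ _ _ hx)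
      ((hg₂c.add continuousOn_const).congr hpiece) hs ht
  · rintro x (hx | hx)
    · rw [piecewise_eq_of_mem _ _ _ hx, hg₁ x hx]
    · rw [hpiece x hx, exp_add, hc, mul_one, hg₂ x hx]

theorem contractibleSpace_image_Icc [T2Space X] {β : ℝ → X} {a b : ℝ} (hab : a ≤ b)
    (hβc : ContinuousOn β (Icc a b)) (hβi : InjOn β (Icc a b)) :
    ContractibleSpace (β '' Icc a b) := by
  have : CompactSpace (Icc a b) := isCompact_iff_compactSpace.mp isCompact_Icc
  have : ContractibleSpace (Icc a b) := (convex_Icc a b).contractibleSpace (nonempty_Icc.mpr hab)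
  have hc : Continuous (Equiv.Set.imageOfInjOn β _ hβi) := hβc.domRestrict.subtype_mk _
  exact hc.homeoOfEquivCompactToT2.symm.contractibleSpace

theorem hasLogOn_image_Icc [T2Space X] {β : ℝ → X} {a b : ℝ} (hab : a ≤ b)
    (hβc : ContinuousOn β (Icc a b)) (hβi : InjOn β (Icc a b)) {f : X → ℂ}
    (hf : ContinuousOn f (β '' Icc a b)) (hf0 : ∀ x ∈ β '' Icc a b, f x ≠ 0) :
    HasLogOn f (β '' Icc a b) :=
  have := contractibleSpace_image_Icc hab hβc hβi
  hasLogOn_of_contractibleSpace hf hf0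

theorem hasLogOn_circuit_sdiff_subarc [T2Space X] {Q Q' : ℝ → X} {w₀ w₁ : X}
    (hQc : ContinuousOn Q (Icc 0 1)) (hQ'c : ContinuousOn Q' (Icc 0 1))
    (hQi : InjOn Q (Icc 0 1)) (hQ'i : InjOn Q' (Icc 0 1)) (hQ0 : Q 0 = w₀) (hQ1 : Q 1 = w₁)
    (hQQ' : Q '' Icc 0 1 ∩ Q' '' Icc 0 1 ⊆ {w₀, w₁}) {a b : ℝ} (ha : 0 < a) (hab : a < b)
    (hb : b < 1) {f : X → ℂ} (hf : ContinuousOn f (Q '' Icc 0 1 ∪ Q' '' Icc 0 1))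
    (hf0 : ∀ x ∈ Q '' Icc 0 1 ∪ Q' '' Icc 0 1, f x ≠ 0) :
    HasLogOn f (Q '' Icc 0 a ∪ Q' '' Icc 0 1 ∪ Q '' Icc b 1) := by
  have hQa : Icc 0 a ⊆ Icc (0 : ℝ) 1 := Icc_subset_Icc_right (by linarith)
  have hQb : Icc b 1 ⊆ Icc (0 : ℝ) 1 := Icc_subset_Icc_left (by linarith)
  have arc : ∀ {β : ℝ → X} {c d : ℝ}, c ≤ d → ContinuousOn β (Icc c d) → InjOn β (Icc c d) →
      β '' Icc c d ⊆ Q '' Icc 0 1 ∪ Q' '' Icc 0 1 → HasLogOn f (β '' Icc c d) :=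
    fun hcd hc hi hs => hasLogOn_image_Icc hcd hc hi (hf.mono hs) fun x hx => hf0 x (hs hx)
  have closed : ∀ {β : ℝ → X} {c d : ℝ}, ContinuousOn β (Icc c d) → IsClosed (β '' Icc c d) :=
    fun hc => (isCompact_Icc.image_of_continuousOn hc).isClosed
  have h₁₂ : Q '' Icc 0 a ∩ Q' '' Icc 0 1 ⊆ {w₀} := by
    rintro x ⟨hxa, hx'⟩
    rcases hQQ' ⟨image_mono hQa hxa, hx'⟩ with rfl | rfl
    · rfl
    · rw [← hQ1, hQi.mem_image_iff hQa (right_mem_Icc.2 zero_le_one)] at hxa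
      linarith [hxa.2]
  have h₁₂₃ : (Q '' Icc 0 a ∪ Q' '' Icc 0 1) ∩ Q '' Icc b 1 ⊆ {w₁} := by
    rintro x ⟨hx | hx, hxb⟩
    · obtain ⟨t, ht, rfl⟩ := hxb
      rw [hQi.mem_image_iff hQa (hQb ht)] at hx
      linarith [hx.2, ht.1]
    · rcases hQQ' ⟨image_mono hQb hxb, hx⟩ with rfl | rfl
      · rw [← hQ0, hQi.mem_image_iff hQb (left_mem_Icc.2 zero_le_one)] at hxb
        linarith [hxb.1]
      · rfl
  refine HasLogOn.union ((closed (hQc.mono hQa)).union (closed hQ'c)) (closed (hQc.mono hQb))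
    (subsingleton_singleton.anti h₁₂₃).isPreconnected ?_
    (arc hb.le (hQc.mono hQb) (hQi.mono hQb) ((image_mono hQb).trans subset_union_left))
  exact HasLogOn.union (closed (hQc.mono hQa)) (closed hQ'c)
    (subsingleton_singleton.anti h₁₂).isPreconnected
    (arc ha.le (hQc.mono hQa) (hQi.mono hQa) ((image_mono hQa).trans subset_union_left))
    (arc zero_le_one hQ'c hQ'i subset_union_right)

end Logarithm

section Plane

noncomputable abbrev toComplex : (ℝ × ℝ) ≃L[ℝ] ℂ := equivRealProdCLM.symm

theorem toComplex_sub_ne_zero {x z : ℝ × ℝ} (h : x ≠ z) : toComplex (x - z) ≠ 0 := by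
  rwa [ne_eq, map_eq_zero_iff _ toComplex.injective, sub_eq_zero]

theorem not_hasLogOn_id_sphere {R : ℝ} (hR : 0 < R) : ¬ HasLogOn id (Metric.sphere (0 : ℂ) R) := by
  rintro ⟨L, hLc, hL⟩
  set c : ℝ → ℂ := fun θ => R * exp (θ * I)
  have hc : ∀ θ, c θ ∈ Metric.sphere (0 : ℂ) R := fun θ => by
    simp [c, norm_exp_ofReal_mul_I, abs_of_pos hR]
  have hc0 : c 0 = R := by simp [c]
  have hc2π : c (2 * Real.pi) = R := by simp [c]
  -- `ψ` takes values in `2πiℤ`, yet `ψ (2π) = ψ 0 - 2πi`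
  set ψ : ℝ → ℂ := fun θ => L (c θ) - L R - θ * I
  have hψc : Continuous ψ := by
    have : Continuous (L ∘ c) := hLc.comp_continuous (by fun_prop) hc
    exact (this.sub continuous_const).sub (by fun_prop)
  have hψ1 : ∀ θ ∈ univ, exp (ψ θ) = 1 := fun θ _ => by
    have hR0 : (R : ℂ) ≠ 0 := ofReal_ne_zero.mpr hR.ne'
    have hLR : exp (L R) = R := hc0 ▸ hL _ (hc 0)
    simp only [ψ, exp_sub, hL _ (hc θ), hLR, id, c]
    field_simp
  have := isPreconnected_univ.eq_of_exp_eq_one hψc.continuousOn hψ1 (mem_univ (2 * Real.pi))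
    (mem_univ 0)
  simp [ψ, hc0, hc2π, Real.pi_ne_zero, I_ne_zero] at this

theorem not_hasLogOn_sub_of_mem_jordanInterior {K : Set (ℝ × ℝ)} (hK : IsClosed K)
    {z : ℝ × ℝ} (hz : z ∈ jordanInterior K) : ¬ HasLogOn (fun x => toComplex (x - z)) K := by
  classical
  intro hlog
  obtain ⟨g, hg⟩ := hasLogOn_iff_exists_continuousMap.mp hlog
  obtain ⟨G, hG⟩ := ContinuousMap.exists_restrict_eq hK g
  have hGK : ∀ x ∈ K, exp (G x) = toComplex (x - z) := fun x hx => by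
    rw [← hg ⟨x, hx⟩, ← hG]
    rfl
  set V := connectedComponentIn Kᶜ z
  have hVK : frontier V ⊆ K := by
    simpa using frontier_connectedComponentIn_subset hK.isOpen_compl z
  -- glued along `frontier V ⊆ K`, this nonvanishing map of the whole plane has a logarithm,
  -- which is a logarithm of `x - z` on a large circle around `z`
  set h : ℝ × ℝ → ℂ := fun x => if x ∈ closure V then exp (G x) else toComplex (x - z)
  have hhc : Continuous h := Continuous.if
    (fun x hx => hGK x (hVK (frontier_closure_subset hx))) (by fun_prop) (by fun_prop)
  have hh0 : ∀ x, h x ≠ 0 := fun x => by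
    by_cases hx : x ∈ closure V
    · simp [h, hx]
    · have hxz : x ≠ z := fun hxz => hx (hxz ▸ subset_closure (mem_connectedComponentIn hz.1))
      simpa [h, hx] using toComplex_sub_ne_zero hxz
  obtain ⟨R, hR, hVR⟩ := ((hz.2.isCompact_closure.image
    (f := fun x => toComplex (x - z)) (by fun_prop)).isBounded).subset_ball_lt 0 0
  have : ContractibleSpace (univ : Set (ℝ × ℝ)) :=
    (convex_univ (𝕜 := ℝ)).contractibleSpace univ_nonempty
  obtain ⟨L, hLc, hL⟩ := hasLogOn_of_contractibleSpace (s := univ) hhc.continuousOn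
    fun x _ => hh0 x
  refine not_hasLogOn_id_sphere hR ⟨fun w => L (z + toComplex.symm w),
    hLc.comp (by fun_prop) (mapsTo_univ _ _), fun w hw => ?_⟩
  have hw' : z + toComplex.symm w ∉ closure V := fun hV => by
    have := hVR (mem_image_of_mem _ hV)
    simp only [add_sub_cancel_left, ContinuousLinearEquiv.apply_symm_apply,
      mem_ball_zero_iff] at this
    exact this.ne (mem_sphere_zero_iff_norm.mp hw)
  have := hL (z + toComplex.symm w) (mem_univ _)
  simpa only [h, if_neg hw', add_sub_cancel_left, ContinuousLinearEquiv.apply_symm_apply, id]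
    using this

theorem hasLogOn_sub_of_mem_jordanExterior {K : Set (ℝ × ℝ)} (hK : IsCompact K)
    {z : ℝ × ℝ} (hz : z ∈ jordanExterior K) : HasLogOn (fun x => toComplex (x - z)) K := by
  set C := connectedComponentIn Kᶜ z
  have hCp : IsPathConnected C := hK.isClosed.isOpen_compl.connectedComponentIn
    |>.isConnected_iff_isPathConnected.mp (isConnected_connectedComponentIn_iff.mpr hz.1)
  obtain ⟨r, hr, hKr⟩ := hK.isBounded.subset_closedBall_lt 0 0
  obtain ⟨u, huC, hur⟩ : ∃ u ∈ C, u ∉ Metric.closedBall 0 r :=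
    not_subset.mp fun h => hz.2 (Metric.isBounded_closedBall.subset h)
  -- `x - u` has a logarithm on a ball around `K`; move `u` to `z` along a path avoiding `K`
  obtain ⟨γ, hγ⟩ := hCp.joinedIn u huC z (mem_connectedComponentIn hz.1)
  have hu : HasLogOn (fun x => toComplex (x - u)) K := by
    have := Metric.contractibleSpace_closedBall (x := (0 : ℝ × ℝ)) hr.le
    refine (hasLogOn_of_contractibleSpace (by fun_prop) fun x hx => ?_).mono hKr
    exact toComplex_sub_ne_zero (ne_of_mem_of_not_mem hx hur)
  obtain ⟨g₀, hg₀⟩ := hasLogOn_iff_exists_continuousMap.mp hu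
  obtain ⟨g, hg⟩ := exists_log_of_homotopy
    (H := fun p : unitInterval × K => toComplex (p.2.1 - γ p.1)) (by fun_prop)
    (fun p => toComplex_sub_ne_zero
      (ne_of_mem_of_not_mem p.2.2 (connectedComponentIn_subset Kᶜ z (hγ p.1))))
    (fun x => by simpa using hg₀ x)
  exact hasLogOn_iff_exists_continuousMap.mpr ⟨g, fun x => by simpa using hg x⟩

theorem mem_jordanExterior_union {A B : Set (ℝ × ℝ)} (hA : IsCompact A) (hB : IsCompact B)
    (hAB : IsPreconnected (A ∩ B)) {z : ℝ × ℝ} (hzA : z ∈ jordanExterior A)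
    (hzB : z ∈ jordanExterior B) : z ∈ jordanExterior (A ∪ B) := by
  have hz : z ∉ A ∪ B := by
    rintro (h | h)
    exacts [hzA.1 h, hzB.1 h]
  refine ⟨hz, fun hb => not_hasLogOn_sub_of_mem_jordanInterior (hA.union hB).isClosed ⟨hz, hb⟩ ?_⟩
  exact (hasLogOn_sub_of_mem_jordanExterior hA hzA).union hA.isClosed hB.isClosed hAB
    (hasLogOn_sub_of_mem_jordanExterior hB hzB)

theorem apply_mem_closure_connectedComponentIn {Q Q' : ℝ → ℝ × ℝ} {w₀ w₁ z : ℝ × ℝ}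
    (hQc : ContinuousOn Q (Icc 0 1)) (hQ'c : ContinuousOn Q' (Icc 0 1))
    (hQi : InjOn Q (Icc 0 1)) (hQ'i : InjOn Q' (Icc 0 1)) (hQ0 : Q 0 = w₀) (hQ1 : Q 1 = w₁)
    (hQQ' : Q '' Icc 0 1 ∩ Q' '' Icc 0 1 ⊆ {w₀, w₁})
    (hz : z ∈ jordanInterior (Q '' Icc 0 1 ∪ Q' '' Icc 0 1)) {s : ℝ} (hs : s ∈ Ioo 0 1) :
    Q s ∈ closure (connectedComponentIn (Q '' Icc 0 1 ∪ Q' '' Icc 0 1)ᶜ z) := by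
  set γ := Q '' Icc 0 1 ∪ Q' '' Icc 0 1
  set U := connectedComponentIn γᶜ z
  have hγ : IsClosed γ := ((isCompact_Icc.image_of_continuousOn hQc).union
    (isCompact_Icc.image_of_continuousOn hQ'c)).isClosed
  by_contra hq
  obtain ⟨l, u, hlu, hN⟩ := mem_nhds_iff_exists_Ioo_subset.mp
    ((hQc.continuousAt (Icc_mem_nhds hs.1 hs.2)).preimage_mem_nhds
      (isClosed_closure.isOpen_compl.mem_nhds hq))
  set a := max l (s / 2)
  set b := min u ((s + 1) / 2)
  have ha : 0 < a := lt_max_of_lt_right (by linarith [hs.1])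
  have hab : a < b := max_lt (lt_min (hlu.1.trans hlu.2) (by linarith [hlu.1, hs.2]))
    (lt_min (by linarith [hlu.2, hs.1]) (by linarith))
  have hb : b < 1 := min_lt_of_right_lt (by linarith [hs.2])
  have hgap : Q '' Ioo a b ⊆ (closure U)ᶜ := image_subset_iff.mpr
    ((Ioo_subset_Ioo (le_max_left _ _) (min_le_left _ _)).trans hN)
  have hQa : Icc 0 a ⊆ Icc (0 : ℝ) 1 := Icc_subset_Icc_right (by linarith)
  have hQb : Icc b 1 ⊆ Icc (0 : ℝ) 1 := Icc_subset_Icc_left (by linarith)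
  set α := Q '' Icc 0 a ∪ Q' '' Icc 0 1 ∪ Q '' Icc b 1
  have hαγ : α ⊆ γ := union_subset (union_subset ((image_mono hQa).trans subset_union_left)
    subset_union_right) ((image_mono hQb).trans subset_union_left)
  have hα : IsClosed α := (((isCompact_Icc.image_of_continuousOn (hQc.mono hQa)).union
    (isCompact_Icc.image_of_continuousOn hQ'c)).union
    (isCompact_Icc.image_of_continuousOn (hQc.mono hQb))).isClosed
  have hfr : frontier U ⊆ α := by
    intro y hy
    have hyγ : y ∈ γ := by simpa using frontier_connectedComponentIn_subset hγ.isOpen_compl z hy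
    rcases hyγ with ⟨t, ht, rfl⟩ | hy'
    · rcases le_or_gt t a with hta | hat
      · exact Or.inl (Or.inl (mem_image_of_mem Q ⟨ht.1, hta⟩))
      rcases lt_or_ge t b with htb | hbt
      · exact absurd (frontier_subset_closure hy) (hgap (mem_image_of_mem Q ⟨hat, htb⟩))
      · exact Or.inr (mem_image_of_mem Q ⟨hbt, ht.2⟩)
    · exact Or.inl (Or.inr hy')
  have hzα : z ∈ jordanInterior α := ⟨fun h => hz.1 (hαγ h), hz.2.subset
    (connectedComponentIn_subset_of_frontier_subset hγ.isOpen_compl.connectedComponentIn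
      (mem_connectedComponentIn hz.1) hfr)⟩
  exact not_hasLogOn_sub_of_mem_jordanInterior hα hzα
    (hasLogOn_circuit_sdiff_subarc hQc hQ'c hQi hQ'i hQ0 hQ1 hQQ' ha hab hb (by fun_prop)
      fun x hx => toComplex_sub_ne_zero (ne_of_mem_of_not_mem hx hz.1))

theorem mem_jordanInterior_of_subset {S T : Set (ℝ × ℝ)} {z : ℝ × ℝ}
    (hz : z ∈ jordanInterior S) (hST : S ⊆ T) (hzT : z ∉ T) : z ∈ jordanInterior T :=
  ⟨hzT, hz.2.subset (connectedComponentIn_mono _ (compl_subset_compl.mpr hST))⟩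

theorem mem_jordanInterior_of_mem_closure {S : Set (ℝ × ℝ)} {z q : ℝ × ℝ}
    (hz : z ∈ jordanInterior S) (hq : q ∉ S) (hqz : q ∈ closure (connectedComponentIn Sᶜ z)) :
    q ∈ jordanInterior S := by
  refine ⟨hq, ?_⟩
  rw [← connectedComponentIn_eq (mem_connectedComponentIn_of_mem_closure hqz hq)]
  exact hz.2

theorem notMem_jordanExterior_of_mem_connectedComponentIn {S : Set (ℝ × ℝ)} {z y : ℝ × ℝ}
    (hz : z ∈ jordanInterior S) (hy : y ∈ connectedComponentIn Sᶜ z) : y ∉ jordanExterior S :=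
  fun h => h.2 (connectedComponentIn_eq hy ▸ hz.2)

theorem mem_jordanInterior_of_detour {S T P : Set (ℝ × ℝ)} {z : ℝ × ℝ} (hS : IsCompact S)
    (hT : IsCompact T) (hP : IsCompact P) (hPc : IsPreconnected P) (hST : S ∩ T ⊆ P)
    (hz : z ∈ jordanInterior (S ∪ T)) (hzPS : z ∉ P ∪ S) (hnot : z ∉ jordanInterior (P ∪ S)) :
    z ∈ jordanInterior (P ∪ T) := by
  have hzPT : z ∉ P ∪ T := by
    rintro (h | h)
    exacts [hzPS (Or.inl h), hz.1 (Or.inr h)]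
  by_contra h
  have hext := mem_jordanExterior_union (hP.union hS) (hP.union hT)
    (by rwa [← union_inter_distrib_left, union_eq_left.mpr hST])
    ⟨hzPS, fun hb => hnot ⟨hzPS, hb⟩⟩ ⟨hzPT, fun hb => h ⟨hzPT, hb⟩⟩
  exact hext.2 (mem_jordanInterior_of_subset hz
    (union_subset_union subset_union_right subset_union_right) hext.1).2

end Plane

theorem stmt7_general
    (Q Q' P : ℝ → ℝ × ℝ) (w₀ w₁ : ℝ × ℝ)
    (hQc : ContinuousOn Q (Icc 0 1)) (hQ'c : ContinuousOn Q' (Icc 0 1))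
    (hPc : ContinuousOn P (Icc 0 1))
    (hQi : InjOn Q (Icc 0 1)) (hQ'i : InjOn Q' (Icc 0 1))
    (hQ0 : Q 0 = w₀) (hQ1 : Q 1 = w₁)
    (hP0 : P 0 = w₀) (hP1 : P 1 = w₁)
    (hQQ' : Q '' (Icc 0 1) ∩ Q' '' (Icc 0 1) = {w₀, w₁})
    (hPQ : P '' (Icc 0 1) ∩ Q '' (Icc 0 1) = {w₀, w₁})
    -- γ = Q ∪ Q' surrounds the origin
    (hsurr : ((0, 0) : ℝ × ℝ) ∈ jordanInterior (Q '' (Icc 0 1) ∪ Q' '' (Icc 0 1)))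
    -- interior points of P lie in the exterior of γ
    (hPext : P '' (Icc 0 1) \ {w₀, w₁} ⊆
      jordanExterior (Q '' (Icc 0 1) ∪ Q' '' (Icc 0 1)))
    -- the circuit P ∪ Q does not surround the origin
    (hnots : ((0, 0) : ℝ × ℝ) ∉ jordanInterior (P '' (Icc 0 1) ∪ Q '' (Icc 0 1)))
    (hnoton : ((0, 0) : ℝ × ℝ) ∉ P '' (Icc 0 1) ∪ Q '' (Icc 0 1)) :
    ((0, 0) : ℝ × ℝ) ∈ jordanInterior (P '' (Icc 0 1) ∪ Q' '' (Icc 0 1)) ∧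
      Q '' (Icc 0 1) \ {w₀, w₁} ⊆ jordanInterior (P '' (Icc 0 1) ∪ Q' '' (Icc 0 1)) := by
  have hwP : ({w₀, w₁} : Set (ℝ × ℝ)) ⊆ P '' Icc 0 1 := by
    rintro w (rfl | rfl)
    exacts [⟨0, left_mem_Icc.2 zero_le_one, hP0⟩, ⟨1, right_mem_Icc.2 zero_le_one, hP1⟩]
  have hz := mem_jordanInterior_of_detour (isCompact_Icc.image_of_continuousOn hQc)
    (isCompact_Icc.image_of_continuousOn hQ'c) (isCompact_Icc.image_of_continuousOn hPc)
    (isPreconnected_Icc.image P hPc) (hQQ'.trans_subset hwP) hsurr hnoton hnots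
  refine ⟨hz, ?_⟩
  rintro q ⟨⟨s, hs, rfl⟩, hqw⟩
  have hs' : s ∈ Ioo 0 1 := ⟨hs.1.lt_of_ne (by rintro rfl; exact hqw (Or.inl hQ0)),
    hs.2.lt_of_ne (by rintro rfl; exact hqw (Or.inr hQ1))⟩
  have hqB : Q s ∉ P '' Icc 0 1 ∪ Q' '' Icc 0 1 := by
    rintro (h | h)
    exacts [hqw (hPQ ▸ ⟨h, mem_image_of_mem Q hs⟩), hqw (hQQ' ▸ ⟨mem_image_of_mem Q hs, h⟩)]
  have hUB : connectedComponentIn (Q '' Icc 0 1 ∪ Q' '' Icc 0 1)ᶜ (0, 0) ⊆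
      (P '' Icc 0 1 ∪ Q' '' Icc 0 1)ᶜ := by
    rintro y hy (hyP | hyQ')
    · by_cases hyw : y ∈ ({w₀, w₁} : Set (ℝ × ℝ))
      · exact connectedComponentIn_subset _ _ hy (Or.inl (hQQ'.ge hyw).1)
      · exact notMem_jordanExterior_of_mem_connectedComponentIn hsurr hy (hPext ⟨hyP, hyw⟩)
    · exact connectedComponentIn_subset _ _ hy (Or.inr hyQ')
  exact mem_jordanInterior_of_mem_closure hz hqB (closure_mono
    (isPreconnected_connectedComponentIn.subset_connectedComponentIn
      (mem_connectedComponentIn hsurr.1) hUB)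
    (apply_mem_closure_connectedComponentIn hQc hQ'c hQi hQ'i hQ0 hQ1 hQQ'.le hsurr hs'))

/-- A self-avoiding circuit `γ = Q ∪ Q'` (two arcs sharing exactly their endpoints
`w₀ ≠ w₁`) surrounds the origin; a detour arc `P` with the same endpoints has its
interior in the exterior of `γ` and the circuit `P ∪ Q` does not surround the origin.
Then `(γ \ Q) ∪ P = P ∪ Q'` is a circuit surrounding the origin, and `Q` minus its
endpoints lies in the interior of the Jordan curve `P ∪ Q'`. -/
theorem stmt7
    (Q Q' P : ℝ → ℝ × ℝ) (w₀ w₁ : ℝ × ℝ) (hw : w₀ ≠ w₁)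
    (hQc : ContinuousOn Q (Icc 0 1)) (hQ'c : ContinuousOn Q' (Icc 0 1))
    (hPc : ContinuousOn P (Icc 0 1))
    (hQi : InjOn Q (Icc 0 1)) (hQ'i : InjOn Q' (Icc 0 1)) (hPi : InjOn P (Icc 0 1))
    (hQ0 : Q 0 = w₀) (hQ1 : Q 1 = w₁)
    (hQ'0 : Q' 0 = w₀) (hQ'1 : Q' 1 = w₁)
    (hP0 : P 0 = w₀) (hP1 : P 1 = w₁)
    (hQQ' : Q '' (Icc 0 1) ∩ Q' '' (Icc 0 1) = {w₀, w₁})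
    (hPQ : P '' (Icc 0 1) ∩ Q '' (Icc 0 1) = {w₀, w₁})
    (hPQ' : P '' (Icc 0 1) ∩ Q' '' (Icc 0 1) = {w₀, w₁})
    -- γ = Q ∪ Q' surrounds the origin
    (hsurr : ((0, 0) : ℝ × ℝ) ∈ jordanInterior (Q '' (Icc 0 1) ∪ Q' '' (Icc 0 1)))
    -- interior points of P lie in the exterior of γ
    (hPext : P '' (Icc 0 1) \ {w₀, w₁} ⊆
      jordanExterior (Q '' (Icc 0 1) ∪ Q' '' (Icc 0 1)))
    -- the circuit P ∪ Q does not surround the origin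
    (hnots : ((0, 0) : ℝ × ℝ) ∉ jordanInterior (P '' (Icc 0 1) ∪ Q '' (Icc 0 1)))
    (hnoton : ((0, 0) : ℝ × ℝ) ∉ P '' (Icc 0 1) ∪ Q '' (Icc 0 1)) :
    ((0, 0) : ℝ × ℝ) ∈ jordanInterior (P '' (Icc 0 1) ∪ Q' '' (Icc 0 1)) ∧
      Q '' (Icc 0 1) \ {w₀, w₁} ⊆ jordanInterior (P '' (Icc 0 1) ∪ Q' '' (Icc 0 1)) :=
  stmt7_general Q Q' P w₀ w₁ hQc hQ'c hPc hQi hQ'i hQ0 hQ1 hP0 hP1 hQQ' hPQ hsurr hPext hnots hnoton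
end

section
/- Under critical bond percolation on ℤ², assume: (i) the expected number L(m,n) of m/10-boxes in a tiling of B(n/2) intersected by the lowest crossing of B(n) satisfies E[L(m,n)] ≤ C (n/m)² π₃(m,n); (ii) with probability at least c > 0, there is an open crossing of B(n/2) which is part of the lowest crossing of B(n); (iii) (Aizenman–Burchard) uniformly over large n and ℓ ≥ 1/n, with probability at least 1−ε every open crossing path of the rescaled box of diameter ≥ 1/10 requires at least C(ε) ℓ^{−1−C₄} sets of diameter ℓ to cover, for some C₄ > 0. Then there is C₃ > 0 such that π₃(m,n) ≥ C₃ (n/m)^{C₄ − 1} for all 1 ≤ m ≤ n. -/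
open MeasureTheory

/-- Markov's inequality applied to `{K ≤ X}`, an event of probability at least `a - b` because
it contains `G \ {Y < K}`. -/
theorem mul_sub_le_integral_of_le_on {Ω : Type*} [MeasurableSpace Ω] {μ : Measure Ω}
    [IsFiniteMeasure μ] {X Y : Ω → ℝ} {G : Set Ω} {K a b : ℝ}
    (hX : 0 ≤ᵐ[μ] X) (hXint : Integrable X μ) (hK : 0 ≤ K) (hb : 0 ≤ b)
    (hG : ENNReal.ofReal a ≤ μ G) (hYX : ∀ ω ∈ G, Y ω ≤ X ω)
    (hY : μ {ω | Y ω < K} ≤ ENNReal.ofReal b) :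
    K * (a - b) ≤ ∫ ω, X ω ∂μ := by
  have hsub : G \ {ω | Y ω < K} ⊆ {ω | K ≤ X ω} := fun ω ⟨hωG, hωY⟩ =>
    (not_lt.mp hωY).trans (hYX ω hωG)
  have hlarge : ENNReal.ofReal (a - b) ≤ μ {ω | K ≤ X ω} :=
    calc ENNReal.ofReal (a - b) = ENNReal.ofReal a - ENNReal.ofReal b := ENNReal.ofReal_sub a hb
      _ ≤ μ G - μ {ω | Y ω < K} := tsub_le_tsub hG hY
      _ ≤ μ (G \ {ω | Y ω < K}) := le_measure_sdiff
      _ ≤ μ {ω | K ≤ X ω} := measure_mono hsub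
  calc K * (a - b) ≤ K * (μ {ω | K ≤ X ω}).toReal :=
        mul_le_mul_of_nonneg_left
          ((ENNReal.ofReal_le_iff_le_toReal (measure_ne_top μ _)).mp hlarge) hK
    _ ≤ ∫ ω, X ω ∂μ := mul_meas_ge_le_integral_of_nonneg hX hXint K

theorem stmt8_general {Ω : Type*} [MeasurableSpace Ω] (μ : Measure Ω) [IsProbabilityMeasure μ]
    (π₃2 : ℕ → ℕ → ℝ)
    (L N : ℕ → ℕ → Ω → ℝ)
    (hLnn : ∀ m n ω, 0 ≤ L m n ω)
    (hLint : ∀ m n, Integrable (L m n) μ)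
    (C C₄ : ℝ) (hC : 0 < C)
    -- (i) first moment bound
    (hfirst : ∀ m n : ℕ, 1 ≤ m → m ≤ n →
      ∫ ω, L m n ω ∂μ ≤ C * ((n : ℝ) / m) ^ 2 * π₃2 m n)
    (c : ℝ) (hc : 0 < c)
    (G : ℕ → ℕ → Set Ω)
    -- (ii) on an event of probability at least c, the box count dominates the covering number
    (hG : ∀ m n : ℕ, 1 ≤ m → m ≤ n → ENNReal.ofReal c ≤ μ (G m n))
    (hGN : ∀ m n : ℕ, 1 ≤ m → m ≤ n → ∀ ω ∈ G m n, N m n ω ≤ L m n ω)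
    -- (iii) Aizenman–Burchard covering lower bound
    (hcover : ∀ ε : ℝ, 0 < ε → ∃ Cε > 0, ∀ m n : ℕ, 1 ≤ m → m ≤ n →
      μ {ω | N m n ω < Cε * ((n : ℝ) / m) ^ (1 + C₄)} ≤ ENNReal.ofReal ε) :
    ∃ C₃ > 0, ∀ m n : ℕ, 1 ≤ m → m ≤ n →
      C₃ * ((n : ℝ) / m) ^ (C₄ - 1) ≤ π₃2 m n := by
  obtain ⟨Cε, hCε, hcov⟩ := hcover (c / 2) (by positivity)
  refine ⟨c / 2 * Cε / C, by positivity, fun m n hm hmn => ?_⟩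
  set x : ℝ := (n : ℝ) / m
  have hx : 0 < x := div_pos (by exact_mod_cast hm.trans hmn) (by exact_mod_cast hm)
  have hbound : Cε * x ^ (1 + C₄) * (c - c / 2) ≤ C * x ^ 2 * π₃2 m n :=
    (mul_sub_le_integral_of_le_on (Filter.Eventually.of_forall (hLnn m n)) (hLint m n)
      (by positivity) (by positivity) (hG m n hm hmn) (hGN m n hm hmn) (hcov m n hm hmn)).trans
      (hfirst m n hm hmn)
  rw [show 1 + C₄ = 2 + (C₄ - 1) by ring, Real.rpow_add hx, Real.rpow_two] at hbound
  calc c / 2 * Cε / C * x ^ (C₄ - 1)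
        = Cε * (x ^ 2 * x ^ (C₄ - 1)) * (c - c / 2) / (C * x ^ 2) := by field_simp; ring
    _ ≤ C * x ^ 2 * π₃2 m n / (C * x ^ 2) := by gcongr
    _ = π₃2 m n := by field_simp

/-- Lemma "AB": suppose (i) the expected number `L(m,n)` of `m/10`-boxes intersected by
the lowest crossing satisfies `E[L(m,n)] ≤ C (n/m)² π₃(m,n)`; (ii) with probability at
least `c > 0` an event `G` holds on which `L(m,n)` dominates the covering number
`N(m,n)` of some open crossing; (iii) (Aizenman–Burchard) for every `ε > 0` there is
`C(ε) > 0` such that `P(N(m,n) < C(ε) (n/m)^{1+C₄}) ≤ ε` uniformly in `1 ≤ m ≤ n`.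
Then there is `C₃ > 0` with `π₃(m,n) ≥ C₃ (n/m)^{C₄ - 1}` for all `1 ≤ m ≤ n`. -/
theorem stmt8 {Ω : Type*} [MeasurableSpace Ω] (μ : Measure Ω) [IsProbabilityMeasure μ]
    (π₃2 : ℕ → ℕ → ℝ) (hπpos : ∀ m n, 0 < π₃2 m n)
    (L N : ℕ → ℕ → Ω → ℝ)
    (hLnn : ∀ m n ω, 0 ≤ L m n ω)
    (hLint : ∀ m n, Integrable (L m n) μ)
    (C C₄ : ℝ) (hC : 0 < C) (hC₄ : 0 < C₄)
    -- (i) first moment bound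
    (hfirst : ∀ m n : ℕ, 1 ≤ m → m ≤ n →
      ∫ ω, L m n ω ∂μ ≤ C * ((n : ℝ) / m) ^ 2 * π₃2 m n)
    (c : ℝ) (hc : 0 < c)
    (G : ℕ → ℕ → Set Ω)
    -- (ii) on an event of probability at least c, the box count dominates the covering number
    (hG : ∀ m n : ℕ, 1 ≤ m → m ≤ n → ENNReal.ofReal c ≤ μ (G m n))
    (hGN : ∀ m n : ℕ, 1 ≤ m → m ≤ n → ∀ ω ∈ G m n, N m n ω ≤ L m n ω)
    -- (iii) Aizenman–Burchard covering lower bound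
    (hcover : ∀ ε : ℝ, 0 < ε → ∃ Cε > 0, ∀ m n : ℕ, 1 ≤ m → m ≤ n →
      μ {ω | N m n ω < Cε * ((n : ℝ) / m) ^ (1 + C₄)} ≤ ENNReal.ofReal ε) :
    ∃ C₃ > 0, ∀ m n : ℕ, 1 ≤ m → m ≤ n →
      C₃ * ((n : ℝ) / m) ^ (C₄ - 1) ≤ π₃2 m n :=
  stmt8_general μ π₃2 L N hLnn hLint C C₄ hC hfirst c hc G hG hGN hcover
end

section
/- Suppose random variables (S_n) and (L_n) on probability spaces with events H_n satisfy: (a) E[S_n · 1_{H_n}] ≤ ε_n · a_n with ε_n → 0; (b) (1/C₁) a_n ≤ E[L_n · 1_{H_n}] ≤ C₂ a_n for all n with positive constants C₁, C₂; (c) for every δ > 0, lim_{ε↓0} limsup_n P(0 < L_n ≤ ε a_n) = 0; (d) L_n > 0 on H_n, S_n ≤ L_n on H_n, and inf_n P(H_n) > 0. Then S_n / L_n → 0 in probability conditionally on H_n, i.e., for every δ > 0, P(S_n/L_n > δ | H_n) → 0. -/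
open MeasureTheory Filter
open scoped ENNReal

/-!
On `H_n`, the event `S_n / L_n > δ` forces either `L_n ≤ ε a_n`, which is rare by the lower-tail
condition once `ε` is small, or `S_n > δ ε a_n`, whose probability is at most `ε_n / (δ ε)` by
Markov's inequality. Hence `P(H_n ∩ {S_n / L_n > δ})` has vanishing limsup, and dividing by
`P(H_n) ≥ h₀ > 0` preserves this.
-/

lemma measure_inter_lt_le_ofReal_integral_indicator_div {Ω : Type*} [MeasurableSpace Ω]
    {μ : Measure Ω} {s : Set Ω} {f : Ω → ℝ} (hf : ∀ ω ∈ s, 0 ≤ f ω) (hint : Integrable (s.indicator f) μ)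
    {c : ℝ} (hc : 0 < c) :
    μ (s ∩ {ω | c < f ω}) ≤ ENNReal.ofReal ((∫ ω, s.indicator f ω ∂μ) / c) := by
  have hnonneg : 0 ≤ᵐ[μ] s.indicator f :=
    Eventually.of_forall fun ω => Set.indicator_nonneg hf ω
  have hsub : s ∩ {ω | c < f ω} ⊆ {ω | ENNReal.ofReal c ≤ ENNReal.ofReal (s.indicator f ω)} :=
    fun ω ⟨hωs, hω⟩ => ENNReal.ofReal_le_ofReal (by simpa [Set.indicator_of_mem hωs] using hω.le)
  calc μ (s ∩ {ω | c < f ω})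
      ≤ μ {ω | ENNReal.ofReal c ≤ ENNReal.ofReal (s.indicator f ω)} := measure_mono hsub
    _ ≤ (∫⁻ ω, ENNReal.ofReal (s.indicator f ω) ∂μ) / ENNReal.ofReal c :=
        meas_ge_le_lintegral_div hint.aemeasurable.ennreal_ofReal
          (ENNReal.ofReal_pos.2 hc).ne' ENNReal.ofReal_ne_top
    _ = ENNReal.ofReal ((∫ ω, s.indicator f ω ∂μ) / c) := by
        rw [← ofReal_integral_eq_lintegral_ofReal hint hnonneg,
          ENNReal.ofReal_div_of_pos hc]

lemma tendsto_measure_inter_lt_mul_of_integral_indicator_le {ι : Type*} {l : Filter ι}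
    {Ω : ι → Type*} [∀ n, MeasurableSpace (Ω n)] {μ : ∀ n, Measure (Ω n)} {s : ∀ n, Set (Ω n)}
    {f : ∀ n, Ω n → ℝ} (hf : ∀ n, ∀ ω ∈ s n, 0 ≤ f n ω)
    (hint : ∀ n, Integrable ((s n).indicator (f n)) (μ n))
    {a ε : ι → ℝ} (ha : ∀ n, 0 < a n) (hε : Tendsto ε l (nhds 0))
    (hle : ∀ n, ∫ ω, (s n).indicator (f n) ω ∂(μ n) ≤ ε n * a n) {c : ℝ} (hc : 0 < c) :
    Tendsto (fun n => μ n (s n ∩ {ω | c * a n < f n ω})) l (nhds 0) := by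
  have hbound : ∀ n, μ n (s n ∩ {ω | c * a n < f n ω}) ≤ ENNReal.ofReal (ε n / c) := by
    intro n
    refine (measure_inter_lt_le_ofReal_integral_indicator_div (hf n) (hint n)
      (mul_pos hc (ha n))).trans (ENNReal.ofReal_le_ofReal ?_)
    rw [div_le_div_iff₀ (mul_pos hc (ha n)) hc]
    nlinarith [hle n]
  have hlim : Tendsto (fun n => ENNReal.ofReal (ε n / c)) l (nhds 0) := by
    simpa using ENNReal.tendsto_ofReal (hε.div_const c)
  exact tendsto_of_tendsto_of_tendsto_of_le_of_le tendsto_const_nhds hlim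
    (fun _ => zero_le) hbound

lemma inter_lt_div_subset {Ω : Type*} {s : Set Ω} {S L : Ω → ℝ} (hL : ∀ ω ∈ s, 0 < L ω)
    {δ : ℝ} (hδ : 0 < δ) (b : ℝ) :
    s ∩ {ω | δ < S ω / L ω} ⊆ {ω | 0 < L ω ∧ L ω ≤ b} ∪ (s ∩ {ω | δ * b < S ω}) := by
  rintro ω ⟨hωs, hω⟩
  rcases le_or_gt (L ω) b with hLb | hbL
  · exact Or.inl ⟨hL ω hωs, hLb⟩
  · refine Or.inr ⟨hωs, ?_⟩
    calc δ * b < δ * L ω := mul_lt_mul_of_pos_left hbL hδ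
      _ < S ω := (lt_div_iff₀ (hL ω hωs)).1 hω

lemma ENNReal.tendsto_zero_of_le_add_of_tendsto_limsup {α ι : Type*} {u : Filter α}
    {l : Filter ι} [l.NeBot] {f : α → ℝ≥0∞} {g h : ι → α → ℝ≥0∞}
    (hfgh : ∀ᶠ i in l, ∀ x, f x ≤ g i x + h i x)
    (hh : ∀ᶠ i in l, Tendsto (h i) u (nhds 0))
    (hg : Tendsto (fun i => limsup (g i) u) l (nhds 0)) :
    Tendsto f u (nhds 0) := by
  have hlimsup : ∀ᶠ i in l, limsup f u ≤ limsup (g i) u := by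
    filter_upwards [hfgh, hh] with i hfi hhi
    calc limsup f u ≤ limsup (g i + h i) u := limsup_le_limsup (Eventually.of_forall hfi)
      _ = limsup (g i) u := ENNReal.limsup_add_of_right_tendsto_zero hhi _
  exact tendsto_of_le_liminf_of_limsup_le zero_le (ge_of_tendsto hg hlimsup)

lemma tendsto_cond_of_tendsto_measure_inter {ι : Type*} {l : Filter ι} {Ω : ι → Type*}
    [∀ n, MeasurableSpace (Ω n)]
    {μ : ∀ n, Measure (Ω n)} {s t : ∀ n, Set (Ω n)} (hs : ∀ n, MeasurableSet (s n))
    {c : ℝ≥0∞} (hc : 0 < c) (hcs : ∀ n, c ≤ μ n (s n))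
    (hst : Tendsto (fun n => μ n (s n ∩ t n)) l (nhds 0)) :
    Tendsto (fun n => ProbabilityTheory.cond (μ n) (s n) (t n)) l (nhds 0) := by
  have hbound : ∀ n, ProbabilityTheory.cond (μ n) (s n) (t n) ≤ c⁻¹ * μ n (s n ∩ t n) := by
    intro n
    rw [ProbabilityTheory.cond_apply (hs n)]
    exact mul_le_mul' (ENNReal.inv_le_inv' (hcs n)) le_rfl
  have hlim : Tendsto (fun n => c⁻¹ * μ n (s n ∩ t n)) l (nhds 0) := by
    simpa using ENNReal.Tendsto.const_mul hst (Or.inr (ENNReal.inv_ne_top.2 hc.ne'))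
  exact tendsto_of_tendsto_of_tendsto_of_le_of_le tendsto_const_nhds hlim
    (fun _ => zero_le) hbound

theorem stmt9_general (Ω : ℕ → Type*) [∀ n, MeasurableSpace (Ω n)]
    (P : ∀ n, Measure (Ω n))
    (S L : ∀ n, Ω n → ℝ) (H : ∀ n, Set (Ω n))
    (hHm : ∀ n, MeasurableSet (H n))
    (a : ℕ → ℝ) (hapos : ∀ n, 0 < a n)
    (εseq : ℕ → ℝ)
    (hε : Tendsto εseq atTop (nhds 0))
    (hSint : ∀ n, Integrable ((H n).indicator (S n)) (P n))
    (ha : ∀ n, ∫ ω, (H n).indicator (S n) ω ∂(P n) ≤ εseq n * a n)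
    (hSL : ∀ n, ∀ ω ∈ H n, 0 < L n ω ∧ 0 ≤ S n ω ∧ S n ω ≤ L n ω)
    (hc : Tendsto
      (fun ε : ℝ => limsup (fun n => P n {ω | 0 < L n ω ∧ L n ω ≤ ε * a n}) atTop)
      (nhdsWithin 0 (Set.Ioi 0)) (nhds 0))
    (h0 : ℝ≥0∞) (hh0 : 0 < h0) (hinf : ∀ n, h0 ≤ P n (H n)) :
    ∀ δ : ℝ, 0 < δ →
      Tendsto (fun n => ProbabilityTheory.cond (P n) (H n)
        {ω | δ < S n ω / L n ω}) atTop (nhds 0) := by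
  intro δ hδ
  refine tendsto_cond_of_tendsto_measure_inter hHm hh0 hinf ?_
  refine ENNReal.tendsto_zero_of_le_add_of_tendsto_limsup
    (h := fun ε n => P n (H n ∩ {ω | δ * (ε * a n) < S n ω})) ?_ ?_ hc
  · filter_upwards with ε n
    exact (measure_mono (inter_lt_div_subset (fun ω hω => (hSL n ω hω).1) hδ _)).trans
      (measure_union_le _ _)
  · filter_upwards [self_mem_nhdsWithin] with ε (hε_pos : 0 < ε)
    simpa only [mul_assoc] using tendsto_measure_inter_lt_mul_of_integral_indicator_le
      (fun n ω hω => (hSL n ω hω).2.1) hSint hapos hε ha (mul_pos hδ hε_pos)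

/-- Deduction of convergence in probability: if (a) `E[S_n 1_{H_n}] ≤ ε_n a_n` with
`ε_n → 0`; (b) `(1/C₁) a_n ≤ E[L_n 1_{H_n}] ≤ C₂ a_n`; (c) the lower-tail condition
`lim_{ε↓0} limsup_n P(0 < L_n ≤ ε a_n) = 0`; (d) on `H_n`, `0 < L_n` and
`0 ≤ S_n ≤ L_n`, and `inf_n P(H_n) > 0`; then `S_n/L_n → 0` in probability
conditionally on `H_n`. -/
theorem stmt9 (Ω : ℕ → Type*) [∀ n, MeasurableSpace (Ω n)]
    (P : ∀ n, Measure (Ω n)) [∀ n, IsProbabilityMeasure (P n)]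
    (S L : ∀ n, Ω n → ℝ) (H : ∀ n, Set (Ω n))
    (hHm : ∀ n, MeasurableSet (H n))
    (hSm : ∀ n, Measurable (S n)) (hLm : ∀ n, Measurable (L n))
    (a : ℕ → ℝ) (hapos : ∀ n, 0 < a n)
    (εseq : ℕ → ℝ) (hεnn : ∀ n, 0 ≤ εseq n)
    (hε : Tendsto εseq atTop (nhds 0))
    (hSint : ∀ n, Integrable ((H n).indicator (S n)) (P n))
    (hLint : ∀ n, Integrable ((H n).indicator (L n)) (P n))
    (ha : ∀ n, ∫ ω, (H n).indicator (S n) ω ∂(P n) ≤ εseq n * a n)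
    (C₁ C₂ : ℝ) (hC₁ : 0 < C₁) (hC₂ : 0 < C₂)
    (hb : ∀ n, (1 / C₁) * a n ≤ ∫ ω, (H n).indicator (L n) ω ∂(P n) ∧
      ∫ ω, (H n).indicator (L n) ω ∂(P n) ≤ C₂ * a n)
    (hSL : ∀ n, ∀ ω ∈ H n, 0 < L n ω ∧ 0 ≤ S n ω ∧ S n ω ≤ L n ω)
    (hc : Tendsto
      (fun ε : ℝ => limsup (fun n => P n {ω | 0 < L n ω ∧ L n ω ≤ ε * a n}) atTop)
      (nhdsWithin 0 (Set.Ioi 0)) (nhds 0))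
    (h0 : ℝ≥0∞) (hh0 : 0 < h0) (hinf : ∀ n, h0 ≤ P n (H n)) :
    ∀ δ : ℝ, 0 < δ →
      Tendsto (fun n => ProbabilityTheory.cond (P n) (H n)
        {ω | δ < S n ω / L n ω}) atTop (nhds 0) :=
  stmt9_general Ω P S L H hHm a hapos εseq hε hSint ha hSL hc h0 hh0 hinf
end
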